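/- arXiv:math/0010004 — 12 statements merged into one kernel-verified Lean document; each statement's English description precedes it below -/
import Mathlib

section
/- Let (M, μ, S) be a Weyl triple in which M is path-connected and S is continuous. Then for every quadruple of points a, b, c, d in M there exists a measure-preserving map φ : M → M such that S(a,b,t) + S(t,c,d) = S(a,φ(t),d) + S(φ(t),b,c) for every t ∈ M. (Consequently the kernel K = e^{iS} is geometrically associative.) -/
open MeasureTheory

/-- For a Weyl triple `(M, μ, S)` with `M` path-connected and `S`
continuous, for every quadruple of points `a b c d` there is a measure-preserving map
`φ : M → M` such that `S a b t + S t c d = S a (φ t) d + S (φ t) b c` for all `t`;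
consequently the kernel `K = e^{iS}` is geometrically associative. -/
theorem weyl_triple_geometric_associativity
    {M : Type*} [TopologicalSpace M] [MeasurableSpace M] [BorelSpace M]
    [PathConnectedSpace M] (μ : Measure M)
    (S : M → M → M → ℝ)
    (hS_cont : Continuous fun p : M × M × M => S p.1 p.2.1 p.2.2)
    (hS_cyc : ∀ x y z, S x y z = S z x y)
    (hS_skew : ∀ x y z, S x y z = - S y x z)
    (hS_cocycle : ∀ x y z m, S x y z = S x y m + S y z m + S z x m)
    (hS_symm : ∀ x : M, ∃ s : M → M, MeasurePreserving s μ μ ∧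
      ∀ y z, S x (s y) z = - S x y z) :
    ∀ a b c d : M, ∃ φ : M → M, MeasurePreserving φ μ μ ∧
      ∀ t : M, S a b t + S t c d = S a (φ t) d + S (φ t) b c := by
  intro a b c d
  -- base point for the cocycle expansion
  set m : M := a with hm
  -- the key one-variable function
  set g : M → ℝ := fun t => S t a m + S t c m - S t b m - S t d m with hg
  have hgdef : ∀ t, g t = S t a m + S t c m - S t b m - S t d m := fun t => rfl
  have hzero : ∀ x z : M, S x x z = 0 := by
    intro x z
    have := hS_skew x x z
    linarith
  -- continuity of g
  have hc : ∀ (y z : M), Continuous fun t => S t y z := by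
    intro y z
    exact hS_cont.comp ((continuous_id.prodMk continuous_const :
      Continuous fun t : M => (t, (y, z))))
  have hgcont : Continuous g := by
    rw [hg]
    exact (((hc a m).add (hc c m)).sub (hc b m)).sub (hc d m)
  clear_value g
  clear hg
  -- LHS in terms of g
  have hLHS : ∀ t, S a b t + S t c d = (S a b m + S c d m) + g t := by
    intro t
    have h1 := hS_cocycle a b t m
    have h2 := hS_cocycle t c d m
    have h3 := hS_skew b t m
    have h4 := hS_skew d t m
    rw [hgdef]
    linarith
  -- RHS in terms of g
  have hRHS : ∀ u, S a u d + S u b c = (S d a m + S b c m) - g u := by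
    intro u
    have h1 := hS_cocycle a u d m
    have h2 := hS_cocycle u b c m
    have h3 := hS_skew a u m
    have h4 := hS_skew c u m
    rw [hgdef]
    linarith
  -- the constant relation
  have hsum : g a + g c = (S d a m + S b c m) - (S a b m + S c d m) := by
    rw [hgdef, hgdef]
    have h1 := hzero a m
    have h2 := hzero c m
    have h3 := hS_skew a c m
    have h4 := hS_skew a d m
    have h5 := hS_skew c b m
    linarith
  -- find x with g x the midpoint, by IVT on the connected space M
  have hx : ∃ x : M, g x = (g a + g c) / 2 := by
    rcases le_total (g a) (g c) with h | h
    · have : (g a + g c) / 2 ∈ Set.Icc (g a) (g c) := ⟨by linarith, by linarith⟩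
      obtain ⟨x, hx⟩ := intermediate_value_univ a c hgcont this
      exact ⟨x, hx⟩
    · have : (g a + g c) / 2 ∈ Set.Icc (g c) (g a) := ⟨by linarith, by linarith⟩
      obtain ⟨x, hx⟩ := intermediate_value_univ c a hgcont this
      exact ⟨x, hx⟩
  obtain ⟨x, hx⟩ := hx
  obtain ⟨s, hs_mp, hs⟩ := hS_symm x
  -- the reflection identity for g
  have key : ∀ y z : M, S (s y) z m =
      -S x (s y) m - S x y m - S y z m - 2 * S z x m := by
    intro y z
    have h1 := hs y z
    have h2 := hS_cocycle x (s y) z m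
    have h3 := hS_cocycle x y z m
    linarith
  have hgrefl : ∀ t, g (s t) = 2 * g x - g t := by
    intro t
    have ka := key t a
    have kc := key t c
    have kb := key t b
    have kd := key t d
    have sa := hS_skew a x m
    have sc := hS_skew c x m
    have sb := hS_skew b x m
    have sd := hS_skew d x m
    rw [hgdef (s t), hgdef t, hgdef x] at *
    linarith
  refine ⟨s, hs_mp, fun t => ?_⟩
  rw [hLHS t, hRHS (s t), hgrefl t, hx]
  linarith [hsum]
end

section
/- Let (M, μ, S) be a Weyl triple in which M is path-connected and S is continuous. Then for every quadruple of points a, b, c, d in M there exists an S-barycenter, i.e. a point g ∈ M with S(a,b,g) + S(g,c,d) = S(a,g,d) + S(g,b,c). -/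
open MeasureTheory

/-- For a Weyl triple `(M, μ, S)` with `M` path-connected and `S`
continuous, every quadruple of points `a b c d` admits an `S`-barycenter, i.e. a point
`g` with `S a b g + S g c d = S a g d + S g b c`. -/
theorem weyl_triple_exists_barycenter
    {M : Type*} [TopologicalSpace M] [MeasurableSpace M] [BorelSpace M]
    [PathConnectedSpace M] (μ : Measure M)
    (S : M → M → M → ℝ)
    (hS_cont : Continuous fun p : M × M × M => S p.1 p.2.1 p.2.2)
    (hS_cyc : ∀ x y z, S x y z = S z x y)
    (hS_skew : ∀ x y z, S x y z = - S y x z)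
    (hS_cocycle : ∀ x y z m, S x y z = S x y m + S y z m + S z x m)
    (hS_symm : ∀ x : M, ∃ s : M → M, MeasurePreserving s μ μ ∧
      ∀ y z, S x (s y) z = - S x y z) :
    ∀ a b c d : M, ∃ g : M, S a b g + S g c d = S a g d + S g b c := by
  intro a b c d
  -- S vanishes when the first two arguments coincide
  have hzero : ∀ x z : M, S x x z = 0 := by
    intro x z
    have := hS_skew x x z
    linarith
  set f : M → ℝ := fun g => S a b g + S g c d - S a g d - S g b c with hf
  have hfc : Continuous f := by
    apply Continuous.sub
    apply Continuous.sub
    apply Continuous.add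
    · exact hS_cont.comp (continuous_const.prodMk
        (continuous_const.prodMk continuous_id))
    · exact hS_cont.comp (continuous_id.prodMk
        (continuous_const.prodMk continuous_const))
    · exact hS_cont.comp (continuous_const.prodMk
        (continuous_id.prodMk continuous_const))
    · exact hS_cont.comp (continuous_id.prodMk
        (continuous_const.prodMk continuous_const))
  have hfa : f a = S a c d - S a b c := by
    have h1 : S a b a = 0 := by rw [hS_cyc]; exact hzero a b
    have h2 : S a a d = 0 := hzero a d
    simp only [hf]
    rw [h1, h2]; ring
  have hfcc : f c = S a b c - S a c d := by
    have h1 : S c c d = 0 := hzero c d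
    have h2 : S c b c = 0 := by rw [hS_cyc]; exact hzero c b
    simp only [hf]
    rw [h1, h2]; ring
  have hsum : f a = - f c := by rw [hfa, hfcc]; ring
  -- path from a to c and IVT
  obtain ⟨γ⟩ := PathConnectedSpace.joined a c
  have hγ : ContinuousOn (f ∘ γ.extend) (Set.Icc (0:ℝ) 1) :=
    (hfc.comp γ.continuous_extend).continuousOn
  have h0 : (f ∘ γ.extend) 0 = f a := by simp
  have h1 : (f ∘ γ.extend) 1 = f c := by simp
  have hmem : (0:ℝ) ∈ Set.Icc (min ((f ∘ γ.extend) 0) ((f ∘ γ.extend) 1))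
      (max ((f ∘ γ.extend) 0) ((f ∘ γ.extend) 1)) := by
    rw [h0, h1]
    rcases le_total (f a) 0 with h | h
    · constructor
      · exact le_trans (min_le_left _ _) h
      · have : 0 ≤ f c := by linarith
        exact le_trans this (le_max_right _ _)
    · constructor
      · have : f c ≤ 0 := by linarith
        exact le_trans (min_le_right _ _) this
      · exact le_trans h (le_max_left _ _)
  have hγ' : ContinuousOn (f ∘ γ.extend) (Set.uIcc (0:ℝ) 1) := by
    rwa [Set.uIcc_of_le (by norm_num : (0:ℝ) ≤ 1)]
  obtain ⟨t, _, ht⟩ := intermediate_value_uIcc hγ' hmem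
  exact ⟨γ.extend t, by simp only [hf, Function.comp] at ht; linarith⟩
end

section
/- For any four points a, b, c, d in the Euclidean plane ℝ², let g := (a+b+c+d)/4 be their center of mass and let s_g(t) := 2g − t be the point reflection through g. Define F(t) := SA(d,a,t) + SA(b,c,t) and G(t) := SA(a,b,t) + SA(d,t,c), where SA(x,y,z) := ½·((y₁−x₁)(z₂−x₂) − (y₂−x₂)(z₁−x₁)) is the signed Euclidean area of the oriented triangle with vertices x, y, z. Then F(t) = G(s_g(t)) for every t ∈ ℝ², i.e. F = s_g*G. -/
/-- For any four points `a b c d` in the Euclidean plane, with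
`g = (a+b+c+d)/4` their center of mass, `s_g t = 2g - t` the point reflection through `g`,
`SA x y z` the signed area of the oriented triangle `xyz`,
`F t = SA d a t + SA b c t` and `G t = SA a b t + SA d t c`, one has `F = s_g* G`. -/
theorem signed_area_quadrilateral_reflection (a b c d : ℝ × ℝ) :
    let SA : ℝ × ℝ → ℝ × ℝ → ℝ × ℝ → ℝ := fun x y z =>
      ((y.1 - x.1) * (z.2 - x.2) - (y.2 - x.2) * (z.1 - x.1)) / 2
    let g : ℝ × ℝ := (4 : ℝ)⁻¹ • (a + b + c + d)
    let sg : ℝ × ℝ → ℝ × ℝ := fun t => (2 : ℝ) • g - t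
    let F : ℝ × ℝ → ℝ := fun t => SA d a t + SA b c t
    let G : ℝ × ℝ → ℝ := fun t => SA a b t + SA d t c
    ∀ t : ℝ × ℝ, F t = G (sg t) := by
  intro SA g sg F G t
  simp only [F, G, SA, sg, g, Prod.smul_def, Prod.sub_def, Prod.add_def, smul_eq_mul]
  ring
end

section
/- On M = ℝ², the symmetries s_{(p,q)}(p',q') := (2p − p', 2·cosh(p − p')·q − q') define a symplectic symmetric space structure: (a) each s_x is an involution, s_x ∘ s_x = id; (b) x is the unique fixed point of s_x; (c) s_x ∘ s_y ∘ s_x = s_{s_x(y)} for all x, y ∈ ℝ²; (d) each s_x is a smooth diffeomorphism whose Jacobian determinant equals 1 at every point, hence it preserves the symplectic form dp ∧ dq (and Lebesgue measure) on ℝ². -/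
open MeasureTheory

private lemma cosh_key (a b c : ℝ) :
    Real.cosh (3*a - 2*b - c) + Real.cosh (a - c)
      = 2 * Real.cosh (2*a - b - c) * Real.cosh (a - b) := by
  have h1 := Real.cosh_add (2*a - b - c) (a - b)
  have h2 := Real.cosh_sub (2*a - b - c) (a - b)
  have e1 : 2*a - b - c + (a - b) = 3*a - 2*b - c := by ring
  have e2 : 2*a - b - c - (a - b) = a - c := by ring
  rw [e1] at h1; rw [e2] at h2
  rw [h1, h2]; ring

set_option maxHeartbeats 1000000 in
/-- On `M = ℝ²` the maps `s_{(p,q)}(p',q') = (2p − p', 2cosh(p−p')q − q')`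
define a symplectic symmetric space structure: each `s_x` is an involution with unique fixed
point `x`, satisfies `s_x ∘ s_y ∘ s_x = s_{s_x y}`, and is a smooth diffeomorphism whose
Jacobian determinant is everywhere `1`, hence preserves Lebesgue measure (and `dp ∧ dq`). -/
theorem elementary_solvable_2d_symmetric_space :
    let s : ℝ × ℝ → ℝ × ℝ → ℝ × ℝ := fun x y =>
      (2 * x.1 - y.1, 2 * Real.cosh (x.1 - y.1) * x.2 - y.2)
    (∀ x, Function.Involutive (s x)) ∧
    (∀ x y, s x y = y ↔ y = x) ∧
    (∀ x y, s x ∘ s y ∘ s x = s (s x y)) ∧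
    (∀ x, ContDiff ℝ (⊤ : ℕ∞) (s x) ∧ (∀ y, (fderiv ℝ (s x) y).det = 1) ∧
      MeasurePreserving (s x) volume volume) := by
  intro s
  refine ⟨?_, ?_, ?_, ?_⟩
  · -- involution
    intro x y
    simp only [s]
    have : x.1 - (2 * x.1 - y.1) = -(x.1 - y.1) := by ring
    rw [this, Real.cosh_neg]
    exact Prod.ext (by ring) (by ring)
  · -- unique fixed point
    intro x y
    constructor
    · intro h
      have h1 : 2 * x.1 - y.1 = y.1 := congrArg Prod.fst h
      have h2 : 2 * Real.cosh (x.1 - y.1) * x.2 - y.2 = y.2 := congrArg Prod.snd h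
      have hx1 : y.1 = x.1 := by linarith
      rw [hx1, sub_self, Real.cosh_zero] at h2
      exact Prod.ext hx1 (by linarith)
    · rintro rfl
      simp only [s, sub_self, Real.cosh_zero, one_mul]
      exact Prod.ext (by ring) (by ring)
  · -- s_x ∘ s_y ∘ s_x = s_{s_x y}
    intro x y
    funext z
    simp only [s, Function.comp_apply]
    refine Prod.ext (by ring) ?_
    simp only
    have e1 : x.1 - (2 * y.1 - (2 * x.1 - z.1)) = 3*x.1 - 2*y.1 - z.1 := by ring
    have e2 : y.1 - (2 * x.1 - z.1) = -(2*x.1 - y.1 - z.1) := by ring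
    have e3 : x.1 - (2 * x.1 - z.1) = -(x.1 - z.1) := by ring
    have e4 : 2 * x.1 - y.1 - z.1 = 2*x.1 - y.1 - z.1 := rfl
    rw [e1, e2, Real.cosh_neg]
    have hk := cosh_key x.1 y.1 z.1
    linear_combination 2 * x.2 * hk
  · -- smoothness, Jacobian, measure preservation
    intro x
    have hsmooth : ContDiff ℝ (⊤ : ℕ∞) (s x) := by
      apply ContDiff.prodMk
      · exact contDiff_const.sub contDiff_fst
      · exact ((contDiff_const.mul ((Real.contDiff_cosh).comp
          (contDiff_const.sub contDiff_fst))).mul contDiff_const).sub contDiff_snd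
    refine ⟨hsmooth, ?_, ?_⟩
    · intro y
      -- explicit derivative
      set c : ℝ := -(2 * x.2 * Real.sinh (x.1 - y.1)) with hc
      set L : (ℝ × ℝ) →L[ℝ] (ℝ × ℝ) :=
        ((-1 : ℝ) • ContinuousLinearMap.fst ℝ ℝ ℝ).prod
          ((c • ContinuousLinearMap.fst ℝ ℝ ℝ) - ContinuousLinearMap.snd ℝ ℝ ℝ) with hL
      have hderiv : HasFDerivAt (s x) L y := by
        have h1 : HasFDerivAt (fun y : ℝ × ℝ => 2 * x.1 - y.1)
            ((-1 : ℝ) • ContinuousLinearMap.fst ℝ ℝ ℝ) y := by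
          have := (hasFDerivAt_const (2 * x.1) y).sub (hasFDerivAt_fst (𝕜 := ℝ) (p := y))
          refine this.congr_fderiv ?_
          ext v <;> simp
        have hinner : HasFDerivAt (fun y : ℝ × ℝ => x.1 - y.1)
            ((-1 : ℝ) • ContinuousLinearMap.fst ℝ ℝ ℝ) y := by
          have := (hasFDerivAt_const (x.1) y).sub (hasFDerivAt_fst (𝕜 := ℝ) (p := y))
          refine this.congr_fderiv ?_
          ext v <;> simp
        have hcosh := hinner.cosh
        have h2 : HasFDerivAt (fun y : ℝ × ℝ => 2 * Real.cosh (x.1 - y.1) * x.2 - y.2)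
            ((c • ContinuousLinearMap.fst ℝ ℝ ℝ) - ContinuousLinearMap.snd ℝ ℝ ℝ) y := by
          have hm := ((hcosh.const_mul (2 : ℝ)).mul_const x.2).sub
            (hasFDerivAt_snd (𝕜 := ℝ) (p := y))
          refine hm.congr_fderiv ?_
          ext v <;>
            simp [hc, ContinuousLinearMap.smul_apply, smul_eq_mul] <;> ring
        exact h1.prodMk h2
      rw [hderiv.fderiv]
      -- compute determinant via the standard basis of ℝ × ℝ
      have hdet : L.det = LinearMap.det (L : (ℝ × ℝ) →ₗ[ℝ] (ℝ × ℝ)) := rfl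
      rw [hdet, ← LinearMap.det_toMatrix (Module.Basis.finTwoProd ℝ)]
      have hM : LinearMap.toMatrix (Module.Basis.finTwoProd ℝ) (Module.Basis.finTwoProd ℝ)
          (L : (ℝ × ℝ) →ₗ[ℝ] (ℝ × ℝ)) = !![-1, 0; c, -1] := by
        ext i j
        fin_cases i <;> fin_cases j <;>
          simp [LinearMap.toMatrix_apply, hL, Module.Basis.finTwoProd_zero, Module.Basis.finTwoProd_one,
            ContinuousLinearMap.smul_apply]
      rw [hM, Matrix.det_fin_two_of]
      ring
    · -- measure preservation via skew product
      have hvol : (volume : Measure (ℝ × ℝ)) = (volume : Measure ℝ).prod volume :=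
        (Measure.volume_eq_prod _ _)
      have hf : MeasurePreserving (fun t : ℝ => 2 * x.1 - t) volume volume :=
        Measure.measurePreserving_sub_left volume (2 * x.1)
      have hgm : Measurable (Function.uncurry
          (fun a b : ℝ => 2 * Real.cosh (x.1 - a) * x.2 - b)) := by
        apply Measurable.sub
        · exact (measurable_const.mul ((Real.continuous_cosh.measurable).comp
            (measurable_const.sub measurable_fst))).mul measurable_const
        · exact measurable_snd
      have hg : ∀ᵐ a : ℝ ∂volume,
          Measure.map (fun b : ℝ => 2 * Real.cosh (x.1 - a) * x.2 - b) volume = volume :=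
        Filter.Eventually.of_forall fun a =>
          (Measure.measurePreserving_sub_left volume _).map_eq
      have := hf.skew_product (g := fun a b : ℝ => 2 * Real.cosh (x.1 - a) * x.2 - b) hgm hg
      rw [hvol]
      exact this
end

section
/- On M = ℝ² with symmetries s_{(p,q)}(p',q') := (2p − p', 2·cosh(p − p')·q − q'), define u((p,q),(p',q')) := sinh(p')·q − sinh(p)·q' and the midpoint map (p,q)/2 := (p/2, q/(2·cosh(p/2))). Then: (a) s_{x/2}(0,0) = x for every x ∈ ℝ²; (b) u(x,y) = −u(y,x); (c) u(x, s_x(y)) = −u(x,y); (d) u(x, s_{x/2}(y)) = −u(x,y); (e) for every κ ∈ ℝ the map τ_κ(p,q) := (p, q − κ·sinh(p)) satisfies u(τ_κ(x), τ_κ(y)) = u(x,y) for all x,y. In particular u is a (0,0)-admissible two-point function. -/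
/-- On `M = ℝ²` with symmetries
`s_{(p,q)}(p',q') = (2p − p', 2cosh(p−p')q − q')`, the function
`u((p,q),(p',q')) = sinh(p')q − sinh(p)q'` and the midpoint map
`(p,q)/2 = (p/2, q/(2cosh(p/2)))` satisfy: `s_{x/2}(0,0) = x`, `u` is antisymmetric,
`u(x, s_x y) = −u(x,y)`, `u(x, s_{x/2} y) = −u(x,y)`, and `u` is invariant under the maps
`τ_κ(p,q) = (p, q − κ sinh p)`. Hence `u` is a `(0,0)`-admissible two-point function. -/
theorem elementary_solvable_2d_admissible_two_point :
    let s : ℝ × ℝ → ℝ × ℝ → ℝ × ℝ := fun x y =>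
      (2 * x.1 - y.1, 2 * Real.cosh (x.1 - y.1) * x.2 - y.2)
    let u : ℝ × ℝ → ℝ × ℝ → ℝ := fun x y =>
      Real.sinh y.1 * x.2 - Real.sinh x.1 * y.2
    let half : ℝ × ℝ → ℝ × ℝ := fun x => (x.1 / 2, x.2 / (2 * Real.cosh (x.1 / 2)))
    (∀ x, s (half x) (0, 0) = x) ∧
    (∀ x y, u x y = - u y x) ∧
    (∀ x y, u x (s x y) = - u x y) ∧
    (∀ x y, u x (s (half x) y) = - u x y) ∧
    (∀ κ : ℝ, ∀ x y,
      u (x.1, x.2 - κ * Real.sinh x.1) (y.1, y.2 - κ * Real.sinh y.1) = u x y) := by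
  intro s u half
  refine ⟨?_, ?_, ?_, ?_, ?_⟩
  · intro x
    have hc : Real.cosh (x.1 / 2) ≠ 0 := ne_of_gt (Real.cosh_pos _)
    simp only [s, half]
    ext <;> simp <;> field_simp
  · intro x y; simp only [u]; ring
  · intro x y
    simp only [s, u]
    have h : (2 * x.1 - y.1) = x.1 + (x.1 - y.1) := by ring
    rw [h, Real.sinh_add, Real.sinh_sub, Real.cosh_sub]
    linear_combination (-(Real.sinh y.1 * x.2)) * Real.cosh_sq_sub_sinh_sq x.1
  · intro x y
    simp only [s, u, half]
    have hc : Real.cosh (x.1 / 2) ≠ 0 := ne_of_gt (Real.cosh_pos _)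
    have hx : x.1 = 2 * (x.1 / 2) := by ring
    have h1 : Real.sinh x.1 = 2 * Real.sinh (x.1 / 2) * Real.cosh (x.1 / 2) := by
      rw [hx, Real.sinh_two_mul]; ring
    have h2 : (2 * (x.1 / 2) - y.1) = (x.1 / 2) + (x.1 / 2 - y.1) := by ring
    rw [h2, Real.sinh_add, Real.sinh_sub, Real.cosh_sub, h1]
    field_simp
    linear_combination (-(Real.sinh y.1 * x.2)) * Real.cosh_sq_sub_sinh_sq (x.1/2)
  · intro κ x y; simp only [u]; ring
end

section
/- On M = ℝ² with symmetries s_{(p,q)}(p',q') := (2p − p', 2·cosh(p − p')·q − q'), define the three-point function S((p,q),(p',q'),(p'',q'')) := sinh(p−p')·q'' + sinh(p''−p)·q' + sinh(p'−p'')·q. Then: (a) S(x,y,z) = S(z,x,y) = −S(y,x,z); (b) S(s_m(x), s_m(y), s_m(z)) = S(x,y,z) for every m ∈ ℝ²; (c) S(x, s_x(y), z) = −S(x,y,z); (d) the amplitude function a((p₁,q₁),(p₂,q₂)) := cosh(p₂ − p₁) satisfies a(s_m(x₁), s_m(x₂)) = a(x₁,x₂) for every m. In particular S is an admissible three-point function,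 and the phase and amplitude of the WKB product kernel are invariant under all symmetries. -/
/-- On `M = ℝ²` with symmetries
`s_{(p,q)}(p',q') = (2p − p', 2cosh(p−p')q − q')`, the three-point function
`S((p,q),(p',q'),(p'',q'')) = sinh(p−p')q'' + sinh(p''−p)q' + sinh(p'−p'')q` is admissible:
it is cyclic, skew, invariant under the diagonal action of every symmetry `s_m`, satisfies
`S(x, s_x y, z) = −S(x,y,z)`, and the amplitude `a(x₁,x₂) = cosh(p₂−p₁)` is likewise
invariant under all symmetries. -/
theorem elementary_solvable_2d_admissible_phase :
    let s : ℝ × ℝ → ℝ × ℝ → ℝ × ℝ := fun x y =>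
      (2 * x.1 - y.1, 2 * Real.cosh (x.1 - y.1) * x.2 - y.2)
    let S : ℝ × ℝ → ℝ × ℝ → ℝ × ℝ → ℝ := fun x y z =>
      Real.sinh (x.1 - y.1) * z.2 + Real.sinh (z.1 - x.1) * y.2
        + Real.sinh (y.1 - z.1) * x.2
    let amp : ℝ × ℝ → ℝ × ℝ → ℝ := fun x₁ x₂ => Real.cosh (x₂.1 - x₁.1)
    (∀ x y z, S x y z = S z x y) ∧
    (∀ x y z, S x y z = - S y x z) ∧
    (∀ m x y z, S (s m x) (s m y) (s m z) = S x y z) ∧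
    (∀ x y z, S x (s x y) z = - S x y z) ∧
    (∀ m x₁ x₂, amp (s m x₁) (s m x₂) = amp x₁ x₂) := by
  refine ⟨?_, ?_, ?_, ?_, ?_⟩
  · intro x y z; dsimp only; ring
  · intro x y z; dsimp only
    rw [show y.1 - x.1 = -(x.1 - y.1) by ring, show x.1 - z.1 = -(z.1 - x.1) by ring,
      show z.1 - y.1 = -(y.1 - z.1) by ring]
    simp only [Real.sinh_neg]; ring
  · intro m x y z; dsimp only
    rw [show 2*m.1 - x.1 - (2*m.1 - y.1) = -(x.1 - y.1) by ring,
      show 2*m.1 - z.1 - (2*m.1 - x.1) = -(z.1 - x.1) by ring,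
      show 2*m.1 - y.1 - (2*m.1 - z.1) = -(y.1 - z.1) by ring]
    simp only [Real.sinh_neg, Real.sinh_sub, Real.cosh_sub]
    ring
  · intro x y z; dsimp only
    rw [show x.1 - (2*x.1 - y.1) = -(x.1 - y.1) by ring,
      show 2*x.1 - y.1 - z.1 = (x.1 - y.1) + (x.1 - z.1) by ring,
      show z.1 - x.1 = -(x.1 - z.1) by ring,
      show y.1 - z.1 = -(x.1 - y.1) + (x.1 - z.1) by ring]
    simp only [Real.sinh_neg, Real.sinh_add, Real.cosh_neg]
    ring
  · intro m x y; dsimp only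
    rw [show 2*m.1 - y.1 - (2*m.1 - x.1) = -(y.1 - x.1) by ring]
    simp only [Real.cosh_neg]
end

section
/- Let M be a set, s : M → M → M a map such that each s_x is a bijection with s_x ∘ s_x = id and s_x ∘ s_y ∘ s_x = s_{s_x(y)} for all x,y. Let o ∈ M and let h : M → M be a midpoint map, i.e. s_{h(x)}(o) = x for all x. Let G be the subgroup of permutations of M generated by {s_x : x ∈ M}. Suppose u : M × M → ℝ satisfies: u(x,y) = −u(y,x), u(x, s_x(y)) = −u(x,y), u(x, s_{h(x)}(y)) = −u(x,y) for all x,y, and u(g(x),g(y)) = u(x,y) for every g ∈ G with g(o) = o. Then the three-point function S(x,y,z) := u(s_{h(x)}(y), s_{h(x)}(z)) satisfies: (a) S(x,y,z) = S(z,x,y) = −S(y,x,z); (b) S(g(x),g(y),g(z)) = S(x,y,z) for every g ∈ G (in particular for every symmetry s_m); (c) S(x, s_x(y), z) = −S(x,y,z). That is, S is an admissible three-point function. -/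
/-- Abstract version of Proposition `MIDPOINT`: on a set `M` with
involutive symmetries `s_x` satisfying `s_x s_y s_x = s_{s_x(y)}`, a base point `o`, a
midpoint map `h` with `s_{h x} o = x`, and with `G` the subgroup of permutations of `M`
generated by the symmetries, any two-point function `u` which is antisymmetric, satisfies
`u(x, s_x y) = −u(x,y)` and `u(x, s_{h x} y) = −u(x,y)`, and is invariant under every
element of `G` fixing `o`, gives rise to an admissible three-point function
`S(x,y,z) = u(s_{h x} y, s_{h x} z)`: cyclic, skew, `G`-invariant (in particular invariant
under all symmetries `s_m`), and satisfying `S(x, s_x y, z) = −S(x,y,z)`. -/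
theorem admissible_from_two_point {M : Type*} (s : M → M → M)
    (hinv : ∀ x, Function.Involutive (s x))
    (hdist : ∀ x y z, s x (s y (s x z)) = s (s x y) z)
    (o : M) (h : M → M) (hmid : ∀ x, s (h x) o = x)
    (u : M → M → ℝ)
    (hu_skew : ∀ x y, u x y = - u y x)
    (hu_sym : ∀ x y, u x (s x y) = - u x y)
    (hu_mid : ∀ x y, u x (s (h x) y) = - u x y)
    (G : Subgroup (Equiv.Perm M))
    (hG : G = Subgroup.closure (Set.range fun x => Function.Involutive.toPerm (s x) (hinv x)))
    (hu_stab : ∀ g ∈ G, g o = o → ∀ x y, u (g x) (g y) = u x y) :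
    let S : M → M → M → ℝ := fun x y z => u (s (h x) y) (s (h x) z)
    (∀ x y z, S x y z = S z x y) ∧
    (∀ x y z, S x y z = - S y x z) ∧
    (∀ g ∈ G, ∀ x y z, S (g x) (g y) (g z) = S x y z) ∧
    (∀ x y z, S x (s x y) z = - S x y z) := by
  intro S
  -- the symmetry at any point, as a permutation
  set σp : M → Equiv.Perm M := fun x => Function.Involutive.toPerm (s x) (hinv x) with hσp
  have hσpG : ∀ x, σp x ∈ G := by
    intro x; rw [hG]; exact Subgroup.subset_closure ⟨x, rfl⟩
  have hσpapp : ∀ x y, σp x y = s x y := fun _ _ => rfl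
  -- `s (h x)` swaps `o` and `x`
  have hswap : ∀ x, s (h x) x = o := by
    intro x
    have := hinv (h x) o
    rwa [hmid] at this
  -- conjugation rule for the midpoint symmetry
  have hconj : ∀ a b c, s (h a) (s b c) = s (s (h a) b) (s (h a) c) := by
    intro a b c
    have := hdist (h a) b (s (h a) c)
    rwa [hinv (h a) c] at this
  -- G-invariance of S
  have hGinv : ∀ g ∈ G, ∀ x y z, S (g x) (g y) (g z) = S x y z := by
    intro g hg x y z
    have hk : (σp (h (g x))) * g * (σp (h x)) ∈ G :=
      mul_mem (mul_mem (hσpG _) hg) (hσpG _)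
    have hko : ((σp (h (g x))) * g * (σp (h x))) o = o := by
      simp only [Equiv.Perm.mul_apply, hσpapp, hmid, hswap]
    have key := hu_stab _ hk hko (s (h x) y) (s (h x) z)
    simp only [Equiv.Perm.mul_apply, hσpapp, hinv (h x) y, hinv (h x) z] at key
    exact key
  -- S with middle argument `o`
  have hSo : ∀ x z, S x o z = - u x z := by
    intro x z
    show u (s (h x) o) (s (h x) z) = - u x z
    rw [hmid, hu_mid]
  -- cyclicity
  have hcyc : ∀ x y z, S x y z = S z x y := by
    intro x y z
    have := hGinv (σp (h x)) (hσpG _) z x y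
    simp only [hσpapp, hswap] at this
    rw [← this, hSo, ← hu_skew]
  -- skewness
  have hskew : ∀ x y z, S x y z = - S y x z := by
    intro x y z
    have := hGinv (σp (h x)) (hσpG _) y x z
    simp only [hσpapp, hswap] at this
    rw [← this, hSo, neg_neg]
  -- reflecting the third argument at the second one
  have hT : ∀ a b c, S a b (s b c) = - S a b c := by
    intro a b c
    show u (s (h a) b) (s (h a) (s b c)) = - u (s (h a) b) (s (h a) c)
    rw [hconj, hu_sym]
  refine ⟨hcyc, hskew, hGinv, ?_⟩
  intro x y z
  rw [hcyc x (s x y) z, hT, ← hcyc]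
end

section
/- Let A be a real vector space, L a real Banach space, and ρ : A → B(L) a linear map into the continuous linear endomorphisms of L whose images pairwise commute; set cosh_a := (exp(ρ(a)) + exp(−ρ(a)))/2 and define on M = A × L the maps s_{(a,l)}(a',l') := (2a − a', 2·cosh_{a−a'}(l) − l'). Then: (a) each s_x is an involution, s_x ∘ s_x = id; (b) x is the unique fixed point of s_x; (c) s_x ∘ s_y ∘ s_x = s_{s_x(y)} for all x, y ∈ M. Hence the family {s_x} gives M the structure of a symmetric space. -/
/-- Let `A` be a real vector space, `L` a real Banach space and
`ρ : A → B(L)` a linear map with pairwise commuting images. With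
`cosh_a = (exp(ρ a) + exp(−ρ a))/2`, the maps
`s_{(a,l)}(a',l') = (2a − a', 2·cosh_{a−a'}(l) − l')` on `M = A × L` are involutions,
have `x` as unique fixed point, and satisfy `s_x ∘ s_y ∘ s_x = s_{s_x(y)}`;
hence they give `M` the structure of a symmetric space. -/
theorem elementary_solvable_symmetric_space
    {A : Type*} [AddCommGroup A] [Module ℝ A]
    {L : Type*} [NormedAddCommGroup L] [NormedSpace ℝ L] [CompleteSpace L]
    (ρ : A →ₗ[ℝ] (L →L[ℝ] L))
    (hcomm : ∀ a b : A, Commute (ρ a) (ρ b)) :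
    let ch : A → (L →L[ℝ] L) := fun a =>
      (2 : ℝ)⁻¹ • (NormedSpace.exp (ρ a) + NormedSpace.exp (-(ρ a)))
    let s : A × L → A × L → A × L := fun x y =>
      (2 • x.1 - y.1, 2 • (ch (x.1 - y.1)) x.2 - y.2)
    (∀ x, Function.Involutive (s x)) ∧
    (∀ x y, s x y = y ↔ y = x) ∧
    (∀ x y, s x ∘ s y ∘ s x = s (s x y)) := by
  intro ch s
  have hch_even : ∀ a : A, ch (-a) = ch a := by
    intro a
    simp only [ch, map_neg, neg_neg, add_comm]
  have hch_zero : ch 0 = 1 := by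
    ext l
    simp only [ch, map_zero, neg_zero, NormedSpace.exp_zero,
      ContinuousLinearMap.smul_apply, ContinuousLinearMap.add_apply,
      ContinuousLinearMap.one_apply]
    rw [← two_smul ℝ l, smul_smul]
    norm_num
  have key : ∀ (u v : A) (l : L), (ch (u + v)) l + (ch (u - v)) l
      = (2 : ℝ) • (ch u) ((ch v) l) := by
    intro u v l
    let +nondep : NormedAlgebra ℚ (L →L[ℝ] L) := .restrictScalars ℚ ℝ _
    have h : Commute (ρ u) (ρ v) := hcomm u v
    have e1 : NormedSpace.exp (ρ u + ρ v)
        = NormedSpace.exp (ρ u) * NormedSpace.exp (ρ v) :=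
      NormedSpace.exp_add_of_commute h
    have e2 : NormedSpace.exp (-(ρ u + ρ v))
        = NormedSpace.exp (-(ρ u)) * NormedSpace.exp (-(ρ v)) := by
      rw [neg_add]
      exact NormedSpace.exp_add_of_commute (h.neg_left.neg_right)
    have e3 : NormedSpace.exp (ρ u - ρ v)
        = NormedSpace.exp (ρ u) * NormedSpace.exp (-(ρ v)) := by
      rw [sub_eq_add_neg]
      exact NormedSpace.exp_add_of_commute h.neg_right
    have e4 : NormedSpace.exp (-(ρ u - ρ v))
        = NormedSpace.exp (-(ρ u)) * NormedSpace.exp (ρ v) := by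
      rw [neg_sub, sub_eq_add_neg, add_comm]
      exact NormedSpace.exp_add_of_commute h.neg_left
    simp only [ch, map_add, map_sub, e1, e2, e3, e4,
      ContinuousLinearMap.smul_apply, ContinuousLinearMap.add_apply,
      ContinuousLinearMap.mul_apply, map_smul, map_add]
    module
  have hrl : ∀ l : L, (2 : ℕ) • l = (2 : ℝ) • l := by
    intro l; rw [two_nsmul, two_smul]
  refine ⟨?_, ?_, ?_⟩
  · -- involution
    intro x y
    simp only [s]
    refine Prod.ext ?_ ?_
    · show 2 • x.1 - (2 • x.1 - y.1) = y.1
      abel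
    · have ha : x.1 - (2 • x.1 - y.1) = -(x.1 - y.1) := by abel
      show 2 • (ch (x.1 - (2 • x.1 - y.1))) x.2 - (2 • (ch (x.1 - y.1)) x.2 - y.2) = y.2
      rw [ha, hch_even]
      abel
  · -- unique fixed point
    intro x y
    constructor
    · intro h
      have h1 := congrArg Prod.fst h
      have h2 := congrArg Prod.snd h
      simp only [s] at h1 h2
      have hx1 : y.1 = x.1 := by
        have : (2 : ℝ) • x.1 = (2 : ℝ) • y.1 := by
          rw [two_smul, two_smul]
          have := sub_eq_iff_eq_add.mp h1
          rw [two_nsmul] at this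
          exact this
        exact (smul_right_injective A (two_ne_zero) this).symm
      have hx2 : y.2 = x.2 := by
        rw [hx1, sub_self, hch_zero] at h2
        simp only [ContinuousLinearMap.one_apply] at h2
        have : (2 : ℝ) • x.2 = (2 : ℝ) • y.2 := by
          rw [two_smul, two_smul]
          have := sub_eq_iff_eq_add.mp h2
          rw [two_nsmul] at this
          exact this
        exact (smul_right_injective L (two_ne_zero) this).symm
      exact Prod.ext hx1 hx2
    · intro h
      subst h
      simp only [s, sub_self, hch_zero, ContinuousLinearMap.one_apply]
      refine Prod.ext ?_ ?_ <;> simp [two_nsmul]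
  · -- s x ∘ s y ∘ s x = s (s x y)
    intro x y
    funext z
    simp only [s, Function.comp_apply, Prod.mk.injEq]
    constructor
    · abel
    · have h1 : x.1 - (2 • y.1 - (2 • x.1 - z.1))
          = (2 • x.1 - y.1 - z.1) + (x.1 - y.1) := by abel
      have h2 : y.1 - (2 • x.1 - z.1) = -(2 • x.1 - y.1 - z.1) := by abel
      have h3 : 2 • x.1 - y.1 - z.1 = (2 • x.1 - y.1 - z.1) := rfl
      have hfun := key (2 • x.1 - y.1 - z.1) (x.1 - y.1) x.2
      have h4 : 2 • x.1 - y.1 - z.1 - (x.1 - y.1) = x.1 - z.1 := by abel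
      rw [h4] at hfun
      rw [h1, h2, hch_even]
      rw [map_sub, map_nsmul]
      simp only [hrl]
      linear_combination (norm := module) (2 : ℝ) • hfun
end

section
/- Let A be a real vector space, L a real Banach space, and ρ : A → B(L) a linear map into the continuous linear endomorphisms of L whose images pairwise commute; on M = A × L with symmetries s_{(a,l)}(a',l') := (2a − a', 2·cosh_{a−a'}(l) − l'), define the L-valued two-point function ũ((a,l),(a',l')) := sinh_{a'}(l) − sinh_a(l'). Then: (a) ũ(x,y) = −ũ(y,x); (b) ũ(x, s_x(y)) = −ũ(x,y); (c) for every κ ∈ L the map τ_κ(a,l) := (a, l − sinh_a(κ)) satisfies ũ(τ_κ(x), τ_κ(y)) = ũ(x,y); (d) if x = (a,l) and m = (a/2, λ) with 2·cosh_{a/2}(λ) = l (so that s_m(0,0) = x), then ũ(x, s_m(y)) = −ũ(x,y) for all y. -/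
section
variable {A : Type*} [AddCommGroup A] {R : Type*} [Ring R] [Algebra ℝ R]
variable (E : A → R)

/-- abstract cosh -/
noncomputable def chE (a : A) : R := (2:ℝ)⁻¹ • (E a + E (-a))
/-- abstract sinh -/
noncomputable def shE (a : A) : R := (2:ℝ)⁻¹ • (E a - E (-a))

variable (hE : ∀ a b, E a * E b = E (a + b))
include hE

lemma shE_mul_chE (a b : A) :
    shE E a * chE E b
      = (4:ℝ)⁻¹ • (E (a + b) + E (a - b) - E (-(a - b)) - E (-(a + b))) := by
  have h1 : a + -b = a - b := (sub_eq_add_neg a b).symm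
  have h2 : -a + b = -(a - b) := by abel
  have h3 : -a + -b = -(a + b) := by abel
  simp only [shE, chE, smul_mul_assoc, mul_smul_comm, smul_smul, sub_mul, mul_add,
    hE, h1, h2, h3]
  module

lemma shE_mul_comm (a b : A) : shE E a * shE E b = shE E b * shE E a := by
  have h1 : ∀ x y : A, x + -y = x - y := fun x y => (sub_eq_add_neg x y).symm
  have h2 : ∀ x y : A, -x + -y = -(x + y) := fun x y => by abel
  simp only [shE, smul_mul_assoc, mul_smul_comm, smul_smul, sub_mul, mul_sub,
    hE, h1, h2]
  have f1 : -a + b = -(a - b) := by abel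
  have f2 : b + a = a + b := by abel
  have f3 : b - a = -(a - b) := by abel
  have f4 : -b + a = a - b := by abel
  have f5 : -b - a = -a - b := by abel
  rw [f1, f2, f3, f4, f5]
  module

lemma chE_mul_comm (a b : A) : chE E a * chE E b = chE E b * chE E a := by
  have h1 : ∀ x y : A, x + -y = x - y := fun x y => (sub_eq_add_neg x y).symm
  have h2 : ∀ x y : A, -x + -y = -(x + y) := fun x y => by abel
  simp only [chE, smul_mul_assoc, mul_smul_comm, smul_smul, add_mul, mul_add,
    hE, h1, h2]
  have f1 : -a + b = -(a - b) := by abel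
  have f2 : b + a = a + b := by abel
  have f3 : b - a = -(a - b) := by abel
  have f4 : -b + a = a - b := by abel
  have f5 : -b - a = -a - b := by abel
  rw [f1, f2, f3, f4, f5]
  module

/-- sinh(a+c) + sinh(a−c) = 2 sinh a cosh c -/
lemma shE_add_shE (a c : A) :
    shE E (a + c) + shE E (a - c) = (2:ℝ) • (shE E a * chE E c) := by
  rw [shE_mul_chE E hE]
  simp only [shE, smul_smul]
  have h1 : -(a + c) = -(a + c) := rfl
  module

end

section
variable {A : Type*} [AddCommGroup A] {R : Type*} [Ring R] [Algebra ℝ R]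
variable (E : A → R) (hE : ∀ a b, E a * E b = E (a + b)) (hE0 : E 0 = 1)

lemma shE_zero : shE E 0 = 0 := by
  simp [shE, neg_zero]

include hE in
lemma shE_two_smul (a : A) : shE E (2 • a) = (2:ℝ) • (shE E a * chE E a) := by
  have h := shE_add_shE E hE a a
  rw [show a + a = 2 • a from (two_smul ℕ a).symm, sub_self, shE_zero, add_zero] at h
  exact h

include hE in
lemma shE_key_d (a c : A) :
    (shE E (a + c) + shE E (a - c)) * chE E a = shE E (2 • a) * chE E c := by
  rw [shE_add_shE E hE, shE_two_smul E hE, smul_mul_assoc, smul_mul_assoc,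
    mul_assoc, mul_assoc, chE_mul_comm E hE]
end



/-- With `A` a real vector space, `L` a real Banach space,
`ρ : A → B(L)` linear with pairwise commuting images,
`cosh_a = (exp(ρ a) + exp(−ρ a))/2`, `sinh_a = (exp(ρ a) − exp(−ρ a))/2`, and symmetries
`s_{(a,l)}(a',l') = (2a − a', 2·cosh_{a−a'}(l) − l')` on `M = A × L`, the `L`-valued
two-point function `ũ((a,l),(a',l')) = sinh_{a'}(l) − sinh_a(l')` satisfies:
(a) `ũ(x,y) = −ũ(y,x)`; (b) `ũ(x, s_x y) = −ũ(x,y)`; (c) `ũ` is invariant under each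
`τ_κ(a,l) = (a, l − sinh_a κ)`; (d) if `x = (a,l)` and `m = (a/2, λ)` with
`2·cosh_{a/2}(λ) = l` (so that `s_m(0,0) = x`), then `ũ(x, s_m y) = −ũ(x,y)`. -/
theorem elementary_solvable_two_point_function
    {A : Type*} [AddCommGroup A] [Module ℝ A]
    {L : Type*} [NormedAddCommGroup L] [NormedSpace ℝ L] [CompleteSpace L]
    (ρ : A →ₗ[ℝ] (L →L[ℝ] L))
    (hcomm : ∀ a b : A, Commute (ρ a) (ρ b)) :
    let ch : A → (L →L[ℝ] L) := fun a =>
      (2 : ℝ)⁻¹ • (NormedSpace.exp (ρ a) + NormedSpace.exp (-(ρ a)))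
    let sh : A → (L →L[ℝ] L) := fun a =>
      (2 : ℝ)⁻¹ • (NormedSpace.exp (ρ a) - NormedSpace.exp (-(ρ a)))
    let s : A × L → A × L → A × L := fun x y =>
      (2 • x.1 - y.1, 2 • (ch (x.1 - y.1)) x.2 - y.2)
    let u : A × L → A × L → L := fun x y => sh y.1 x.2 - sh x.1 y.2
    (∀ x y, u x y = - u y x) ∧
    (∀ x y, u x (s x y) = - u x y) ∧
    (∀ κ : L, ∀ x y, u (x.1, x.2 - sh x.1 κ) (y.1, y.2 - sh y.1 κ) = u x y) ∧
    (∀ (a a₂ : A) (l lam : L), a = 2 • a₂ → 2 • ch a₂ lam = l →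
      ∀ y, u (a, l) (s (a₂, lam) y) = - u (a, l) y) := by
  intro ch sh s u
  set E : A → (L →L[ℝ] L) := fun a => NormedSpace.exp (ρ a) with hEdef
  have hE : ∀ a b, E a * E b = E (a + b) := by
    intro a b
    simp only [hEdef]
    let +nondep : NormedAlgebra ℚ (L →L[ℝ] L) := .restrictScalars ℚ ℝ (L →L[ℝ] L)
    rw [map_add, NormedSpace.exp_add_of_commute (hcomm a b)]
  have hsh : sh = shE E := by
    funext a; simp [sh, shE, hEdef, map_neg]
  have hch : ch = chE E := by
    funext a; simp [ch, chE, hEdef, map_neg]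
  refine ⟨fun x y => by simp only [u]; abel, ?_, ?_, ?_⟩
  · -- (b)
    intro x y
    simp only [u, s, hsh, hch, map_sub, map_nsmul]
    have h := shE_add_shE E hE x.1 (x.1 - y.1)
    rw [show x.1 + (x.1 - y.1) = 2 • x.1 - y.1 from by abel,
        show x.1 - (x.1 - y.1) = y.1 from by abel] at h
    have hv : shE E (2 • x.1 - y.1) x.2 + shE E y.1 x.2
        = (2:ℝ) • shE E x.1 (chE E (x.1 - y.1) x.2) := by
      have := congrArg (fun T : L →L[ℝ] L => T x.2) h
      simpa [ContinuousLinearMap.mul_apply] using this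
    have h2 : (2:ℕ) • shE E x.1 (chE E (x.1 - y.1) x.2)
        = (2:ℝ) • shE E x.1 (chE E (x.1 - y.1) x.2) := by
      rw [two_smul, two_smul]
    rw [h2]
    linear_combination (norm := module) hv
  · -- (c)
    intro κ x y
    simp only [u, map_sub]
    have h := congrArg (fun T : L →L[ℝ] L => T κ) (shE_mul_comm E hE x.1 y.1)
    simp only [ContinuousLinearMap.mul_apply] at h
    simp only [hsh]
    rw [h]
    abel
  · -- (d)
    intro a a₂ l lam ha hl y
    subst ha; subst hl
    simp only [u, s, hsh, hch, map_sub, map_nsmul]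
    -- operator identity
    have hop : (shE E (2 • a₂ - y.1) + shE E y.1) * chE E a₂
        = shE E (2 • a₂) * chE E (a₂ - y.1) := by
      have h := shE_key_d E hE a₂ (a₂ - y.1)
      rw [show a₂ + (a₂ - y.1) = 2 • a₂ - y.1 from by abel,
          show a₂ - (a₂ - y.1) = y.1 from by abel] at h
      exact h
    have hv : shE E (2 • a₂ - y.1) (chE E a₂ lam) + shE E y.1 (chE E a₂ lam)
        = shE E (2 • a₂) (chE E (a₂ - y.1) lam) := by
      have := congrArg (fun T : L →L[ℝ] L => T lam) hop
      simpa [ContinuousLinearMap.mul_apply] using this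
    have h2 : ∀ v : L, (2:ℕ) • v = (2:ℝ) • v := fun v => by rw [two_smul, two_smul]
    simp only [h2]
    linear_combination (norm := module) ((2:ℝ) • hv)
end

section
/- Let A be a real vector space, L a real Banach space, and ρ : A → B(L) a linear map into the continuous linear endomorphisms of L whose images pairwise commute; on M = A × L with symmetries s_{(a,l)}(a',l') := (2a − a', 2·cosh_{a−a'}(l) − l'), let ξ : L → ℝ be a continuous linear functional and define S((a₁,l₁),(a₂,l₂),(a₃,l₃)) := ξ( sinh_{a₁−a₂}(l₃) + sinh_{a₂−a₃}(l₁) + sinh_{a₃−a₁}(l₂) ). Then: (a) S(x,y,z) = S(z,x,y) = −S(y,x,z); (b) S(s_m(x), s_m(y), s_m(z)) = S(x,y,z) for every m ∈ M; (c) S(x, s_x(y), z) = −S(x,y,z). That is, S is an admissible three-point (phase) function. -/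
namespace AdmAux
variable {A : Type*} [AddCommGroup A] [Module ℝ A]
  {L : Type*} [NormedAddCommGroup L] [NormedSpace ℝ L] [CompleteSpace L]
  (ρ : A →ₗ[ℝ] (L →L[ℝ] L))

noncomputable def F (a : A) : L →L[ℝ] L := NormedSpace.exp (ρ a)
noncomputable def sh (a : A) : L →L[ℝ] L := (2:ℝ)⁻¹ • (F ρ a - F ρ (-a))
noncomputable def ch (a : A) : L →L[ℝ] L := (2:ℝ)⁻¹ • (F ρ a + F ρ (-a))

variable (hcomm : ∀ a b : A, Commute (ρ a) (ρ b))

set_option linter.unusedSectionVars false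

set_option synthInstance.maxHeartbeats 800000

include hcomm

theorem Fmul (a b : A) : F ρ a * F ρ b = F ρ (a + b) := by
  rw [F, F, F, map_add, NormedSpace.exp_add_of_commute_of_mem_ball (𝕂 := ℝ) (hcomm a b)
    ((NormedSpace.expSeries_radius_eq_top ℝ (L →L[ℝ] L)).symm ▸ edist_lt_top _ _)
    ((NormedSpace.expSeries_radius_eq_top ℝ (L →L[ℝ] L)).symm ▸ edist_lt_top _ _)]

omit hcomm in
theorem sh_neg (a : A) : sh ρ (-a) = - sh ρ a := by
  rw [sh, sh, neg_neg]; module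

theorem shch (p q : A) :
    sh ρ p * ch ρ q = (2:ℝ)⁻¹ • (sh ρ (p + q) + sh ρ (p - q)) := by
  rw [sh, ch, smul_mul_assoc, mul_smul_comm, smul_smul, sub_mul, mul_add, mul_add,
    Fmul ρ hcomm, Fmul ρ hcomm, Fmul ρ hcomm, Fmul ρ hcomm]
  have e1 : p + -q = p - q := by abel
  have e2 : -p + -q = -(p + q) := by abel
  have e3 : -p + q = -(p - q) := by abel
  rw [e1, e2, e3, sh, sh]
  have e4 : -(p - q) = q - p := by abel
  rw [e4]
  module

theorem identity3 (u v w m : A) :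
    sh ρ (u - v) * ch ρ (m - w) + sh ρ (v - w) * ch ρ (m - u)
      + sh ρ (w - u) * ch ρ (m - v) = 0 := by
  rw [shch ρ hcomm, shch ρ hcomm, shch ρ hcomm]
  have h1 : w - u + (m - v) = -(v - w - (m - u)) := by abel
  have h2 : v - w + (m - u) = -(u - v - (m - w)) := by abel
  have h3 : w - u - (m - v) = -(u - v + (m - w)) := by abel
  rw [h1, h2, h3, sh_neg, sh_neg, sh_neg]
  module

theorem identity4 (u v w : A) :
    sh ρ (2 • u - v - w) + (2:ℝ) • (sh ρ (w - u) * ch ρ (u - v)) + sh ρ (v - w) = 0 := by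
  rw [shch ρ hcomm]
  have h1 : w - u + (u - v) = -(v - w) := by abel
  have h2 : w - u - (u - v) = -(2 • u - v - w) := by abel
  rw [h1, h2, sh_neg, sh_neg]
  module

end AdmAux


/-- With `A` a real vector space, `L` a real Banach space,
`ρ : A → B(L)` linear with pairwise commuting images,
`sinh_a = (exp(ρ a) − exp(−ρ a))/2`, `cosh_a = (exp(ρ a) + exp(−ρ a))/2`, symmetries
`s_{(a,l)}(a',l') = (2a − a', 2·cosh_{a−a'}(l) − l')` on `M = A × L`, and a continuous
linear functional `ξ : L → ℝ`, the three-point function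
`S((a₁,l₁),(a₂,l₂),(a₃,l₃)) = ξ(sinh_{a₁−a₂} l₃ + sinh_{a₂−a₃} l₁ + sinh_{a₃−a₁} l₂)`
is admissible: cyclic, skew, invariant under the diagonal action of every symmetry, and
satisfies `S(x, s_x y, z) = −S(x,y,z)`. -/
theorem elementary_solvable_admissible_phase
    {A : Type*} [AddCommGroup A] [Module ℝ A]
    {L : Type*} [NormedAddCommGroup L] [NormedSpace ℝ L] [CompleteSpace L]
    (ρ : A →ₗ[ℝ] (L →L[ℝ] L))
    (hcomm : ∀ a b : A, Commute (ρ a) (ρ b))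
    (ξ : L →L[ℝ] ℝ) :
    let ch : A → (L →L[ℝ] L) := fun a =>
      (2 : ℝ)⁻¹ • (NormedSpace.exp (ρ a) + NormedSpace.exp (-(ρ a)))
    let sh : A → (L →L[ℝ] L) := fun a =>
      (2 : ℝ)⁻¹ • (NormedSpace.exp (ρ a) - NormedSpace.exp (-(ρ a)))
    let s : A × L → A × L → A × L := fun x y =>
      (2 • x.1 - y.1, 2 • (ch (x.1 - y.1)) x.2 - y.2)
    let S : A × L → A × L → A × L → ℝ := fun x y z =>
      ξ (sh (x.1 - y.1) z.2 + sh (y.1 - z.1) x.2 + sh (z.1 - x.1) y.2)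
    (∀ x y z, S x y z = S z x y) ∧
    (∀ x y z, S x y z = - S y x z) ∧
    (∀ m x y z, S (s m x) (s m y) (s m z) = S x y z) ∧
    (∀ x y z, S x (s x y) z = - S x y z) := by
  intro ch sh s S
  have hsh : sh = fun a => AdmAux.sh ρ a := by
    funext a; simp only [sh, AdmAux.sh, AdmAux.F, map_neg]
  have hch : ch = fun a => AdmAux.ch ρ a := by
    funext a; simp only [ch, AdmAux.ch, AdmAux.F, map_neg]
  refine ⟨?_, ?_, ?_, ?_⟩
  · intro x y z
    simp only [S]
    congr 1
    abel
  · intro x y z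
    simp only [S, hsh]
    have e1 : y.1 - x.1 = -(x.1 - y.1) := by abel
    have e2 : x.1 - z.1 = -(z.1 - x.1) := by abel
    have e3 : z.1 - y.1 = -(y.1 - z.1) := by abel
    rw [e1, e2, e3, AdmAux.sh_neg, AdmAux.sh_neg, AdmAux.sh_neg, ← map_neg]
    congr 1
    simp only [ContinuousLinearMap.neg_apply]
    abel
  · intro m x y z
    simp only [S, s, hsh, hch]
    have e1 : 2 • m.1 - x.1 - (2 • m.1 - y.1) = -(x.1 - y.1) := by abel
    have e2 : 2 • m.1 - y.1 - (2 • m.1 - z.1) = -(y.1 - z.1) := by abel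
    have e3 : 2 • m.1 - z.1 - (2 • m.1 - x.1) = -(z.1 - x.1) := by abel
    rw [e1, e2, e3, AdmAux.sh_neg, AdmAux.sh_neg, AdmAux.sh_neg]
    have key := congrArg (fun T : L →L[ℝ] L => ξ (T m.2))
      (AdmAux.identity3 ρ hcomm x.1 y.1 z.1 m.1)
    simp only [ContinuousLinearMap.add_apply, ContinuousLinearMap.mul_apply,
      ContinuousLinearMap.zero_apply, map_add, map_zero] at key
    simp only [two_nsmul, ContinuousLinearMap.neg_apply, map_sub, map_add, map_neg]
    linarith [key]
  · intro x y z
    simp only [S, s, hsh, hch]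
    have e1 : x.1 - (2 • x.1 - y.1) = -(x.1 - y.1) := by abel
    rw [e1, AdmAux.sh_neg]
    have key := congrArg (fun T : L →L[ℝ] L => ξ (T x.2))
      (AdmAux.identity4 ρ hcomm x.1 y.1 z.1)
    simp only [ContinuousLinearMap.add_apply, ContinuousLinearMap.mul_apply,
      ContinuousLinearMap.smul_apply, ContinuousLinearMap.zero_apply, map_add, map_smul,
      map_zero, smul_eq_mul] at key
    simp only [two_nsmul] at key
    simp only [two_nsmul, ContinuousLinearMap.neg_apply, map_sub, map_add, map_neg]
    linarith [key]
end

section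
/- Let E be a finite-dimensional real normed vector space and φ : E → E a local homeomorphism (every point has an open neighborhood mapped homeomorphically by φ onto an open set) for which there exist c > 0 and R ≥ 0 with ‖φ(x)‖ ≥ c·‖x‖ whenever ‖x‖ ≥ R. Then φ is bijective, and is a homeomorphism of E onto E. (In particular, a twisting map with these properties is a global diffeomorphism, so the associated symmetric space has a globally defined midpoint map.) -/
open Set Filter Topology

section LiftExistsAux

variable {E : Type*} [MetricSpace E] {φ : E → E}

lemma lift_exists_aux (hφ : IsLocalHomeomorph φ)
    (hprop : ∀ K : Set E, IsCompact K → IsCompact (φ ⁻¹' K))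
    (γ : ℝ → E) (hγ : Continuous γ)
    (h0 : ∀ t ≤ (0:ℝ), γ t = γ 0) (h1 : ∀ t, (1:ℝ) ≤ t → γ t = γ 1)
    (x₀ : E) (hx₀ : φ x₀ = γ 0) :
    ∃ Γ : ℝ → E, Continuous Γ ∧ Γ 0 = x₀ ∧ ∀ t, φ (Γ t) = γ t := by
  set S : Set ℝ := {t | ∃ Γ : ℝ → E, Continuous Γ ∧ Γ 0 = x₀ ∧ ∀ s ≤ t, φ (Γ s) = γ s} with hS
  have hS0 : (0:ℝ) ∈ S :=
    ⟨fun _ => x₀, continuous_const, rfl, fun s hs => by rw [hx₀, h0 s hs]⟩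
  by_cases hex : ∃ t ∈ S, (1:ℝ) ≤ t
  · obtain ⟨t, ⟨Γ, hΓc, hΓ0, hΓ⟩, ht⟩ := hex
    refine ⟨fun s => Γ (min s 1), hΓc.comp (continuous_id.min continuous_const), by simp [hΓ0], ?_⟩
    intro s
    rcases le_total s 1 with h | h
    · show φ (Γ (min s 1)) = γ s
      rw [min_eq_left h]; exact hΓ s (le_trans h ht)
    · show φ (Γ (min s 1)) = γ s
      rw [min_eq_right h, hΓ 1 ht, h1 s h]
  · push_neg at hex
    have hbdd : BddAbove S := ⟨1, fun t ht => (hex t ht).le⟩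
    set β := sSup S with hβ
    have hβ0 : 0 ≤ β := le_csSup hbdd hS0
    obtain ⟨u, hu_mono, hu_tends, hu_mem⟩ := exists_seq_tendsto_sSup ⟨0, hS0⟩ hbdd
    set v : ℕ → ℝ := fun n => max (u n) 0 with hv
    have hv_mem : ∀ n, v n ∈ S := by
      intro n
      rcases le_total (u n) 0 with h | h
      · simpa [hv, max_eq_right h] using hS0
      · simpa [hv, max_eq_left h] using hu_mem n
    have hv_tends : Tendsto v atTop (𝓝 β) := by
      have := hu_tends.max (tendsto_const_nhds (x := (0:ℝ)))
      rwa [max_eq_left hβ0] at this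
    have hv_le : ∀ n, v n ≤ β := fun n => le_csSup hbdd (hv_mem n)
    have hv0 : ∀ n, 0 ≤ v n := fun n => le_max_right _ _
    have hv1 : ∀ n, v n ≤ 1 := fun n => (hex _ (hv_mem n)).le
    choose Γs hΓc hΓ0 hΓl using hv_mem
    -- the compact set containing all lift values
    have hK : IsCompact (φ ⁻¹' (γ '' Icc 0 1)) := hprop _ (isCompact_Icc.image hγ)
    have hxK : ∀ n, Γs n (v n) ∈ φ ⁻¹' (γ '' Icc 0 1) := by
      intro n
      have := hΓl n (v n) le_rfl
      exact mem_preimage.2 (this ▸ mem_image_of_mem γ ⟨hv0 n, hv1 n⟩)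
    obtain ⟨xs, hxsK, ψ, hψ, hxψ⟩ := hK.tendsto_subseq hxK
    have hφxs : φ xs = γ β := by
      have l1 : Tendsto (fun k => φ (Γs (ψ k) (v (ψ k)))) atTop (𝓝 (φ xs)) :=
        (hφ.continuous.continuousAt.tendsto).comp hxψ
      have l2 : Tendsto (fun k => φ (Γs (ψ k) (v (ψ k)))) atTop (𝓝 (γ β)) := by
        have : (fun k => φ (Γs (ψ k) (v (ψ k)))) = fun k => γ (v (ψ k)) := by
          funext k; exact hΓl (ψ k) (v (ψ k)) le_rfl
        rw [this]
        exact (hγ.continuousAt.tendsto).comp (hv_tends.comp hψ.tendsto_atTop)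
      exact tendsto_nhds_unique l1 l2
    obtain ⟨e, hxe, hee⟩ := hφ xs
    have hβt : γ β ∈ e.target := by
      rw [← hφxs, hee]; exact e.map_source hxe
    obtain ⟨δ, hδpos, hδ⟩ :=
      Metric.isOpen_iff.mp (e.open_target.preimage hγ) β hβt
    -- pick a good index
    have hev : ∀ᶠ k in atTop, β - δ / 2 < v (ψ k) ∧ Γs (ψ k) (v (ψ k)) ∈ e.source := by
      have e1 : ∀ᶠ k in atTop, β - δ / 2 < v (ψ k) :=
        (hv_tends.comp hψ.tendsto_atTop).eventually (eventually_gt_nhds (by linarith))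
      have e2 : ∀ᶠ k in atTop, Γs (ψ k) (v (ψ k)) ∈ e.source :=
        hxψ.eventually (e.open_source.mem_nhds hxe)
      exact e1.and e2
    obtain ⟨k, hk1, hk2⟩ := hev.exists
    set n := ψ k with hn
    set τ := v n with hτ
    have hτβ : τ ≤ β := hv_le n
    have hτδ : β - δ / 2 < τ := hk1
    have hτ0 : 0 ≤ τ := hv0 n
    have hball : ∀ s, β - δ < s → s < β + δ → γ s ∈ e.target := by
      intro s hs1 hs2
      exact hδ (by rw [Real.ball_eq_Ioo]; exact ⟨hs1, hs2⟩)
    -- the glued lift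
    have hmem : ∀ s : ℝ, γ (min (max s τ) (β + δ / 2)) ∈ e.target := by
      intro s
      apply hball
      · apply lt_min
        · calc β - δ < β - δ / 2 := by linarith
            _ < τ := hτδ
            _ ≤ max s τ := le_max_right _ _
        · linarith
      · calc min (max s τ) (β + δ / 2) ≤ β + δ / 2 := min_le_right _ _
          _ < β + δ := by linarith
    have hmatch : e.symm (γ τ) = Γs n τ := by
      have h2 : e (Γs n τ) = γ τ := by rw [← hee]; exact hΓl n τ le_rfl
      rw [← h2, e.left_inv hk2]
    set g₂ : ℝ → E := fun s => e.symm (γ (min (max s τ) (β + δ / 2))) with hg₂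
    have hg₂c : Continuous g₂ := by
      apply e.continuousOn_symm.comp_continuous
      · exact hγ.comp ((continuous_id.max continuous_const).min continuous_const)
      · exact hmem
    have hg₂τ : g₂ τ = Γs n τ := by
      rw [hg₂]
      simp only [max_self]
      rw [min_eq_left (by linarith : τ ≤ β + δ / 2)]
      exact hmatch
    set Γ' : ℝ → E := fun s => if s ≤ τ then Γs n s else g₂ s with hΓ'
    have hΓ'c : Continuous Γ' := by
      apply Continuous.if_le (hΓc n) hg₂c continuous_id continuous_const
      intro s hs
      rw [show s = τ from hs, hg₂τ]
    have hSβ : β + δ / 2 ∈ S := by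
      refine ⟨Γ', hΓ'c, ?_, ?_⟩
      · rw [hΓ']
        simp only [if_pos hτ0]
        exact hΓ0 n
      · intro s hs
        by_cases hsτ : s ≤ τ
        · rw [hΓ']; simp only [if_pos hsτ]; exact hΓl n s hsτ
        · rw [hΓ']
          simp only [if_neg hsτ]
          push_neg at hsτ
          have hclamp : min (max s τ) (β + δ / 2) = s := by
            rw [max_eq_left hsτ.le, min_eq_left hs]
          rw [hg₂]
          simp only [hclamp]
          rw [hee]
          exact e.right_inv (hball s (by linarith) (by linarith))
    have := le_csSup hbdd hSβ
    linarith

end LiftExistsAux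

section SectionContAux

variable {E : Type*} [NormedAddCommGroup E] [NormedSpace ℝ E]

lemma lift_unique_aux {φ : E → E} (hφ : IsLocalHomeomorph φ) {A : Type*} [TopologicalSpace A]
    [PreconnectedSpace A] {g₁ g₂ : A → E} (h₁ : Continuous g₁) (h₂ : Continuous g₂)
    (h : ∀ a, φ (g₁ a) = φ (g₂ a)) {a₀ : A} (ha : g₁ a₀ = g₂ a₀) : g₁ = g₂ := by
  have hcl : IsClosed {a | g₁ a = g₂ a} := isClosed_eq h₁ h₂
  have hop : IsOpen {a | g₁ a = g₂ a} := by
    rw [isOpen_iff_mem_nhds]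
    intro a ha'
    have ha' : g₁ a = g₂ a := ha'
    obtain ⟨e, hae, hee⟩ := hφ (g₁ a)
    have h1 : ∀ᶠ b in 𝓝 a, g₁ b ∈ e.source :=
      h₁.continuousAt (e.open_source.mem_nhds hae)
    have h2 : ∀ᶠ b in 𝓝 a, g₂ b ∈ e.source :=
      h₂.continuousAt (e.open_source.mem_nhds (by rwa [ha'] at hae))
    filter_upwards [h1, h2] with b hb1 hb2
    have : e (g₁ b) = e (g₂ b) := by rw [← hee]; exact h b
    exact e.injOn hb1 hb2 this
  have hne : {a | g₁ a = g₂ a}.Nonempty := ⟨a₀, ha⟩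
  have := IsClopen.eq_univ ⟨hcl, hop⟩ hne
  funext a
  exact (this ▸ mem_univ a : a ∈ {a | g₁ a = g₂ a})

lemma section_continuousAt {φ : E → E} (hφ : IsLocalHomeomorph φ) (x₀ : E)
    (Γf : E → ℝ → E) (hΓfc : ∀ y, Continuous (Γf y)) (hΓf0 : ∀ y, Γf y 0 = x₀)
    (hΓf : ∀ y t, φ (Γf y t) = (min (max t 0) 1) • y) (y : E) :
    ContinuousAt (fun y' => Γf y' 1) y := by
  have hclamp : ∀ t ∈ Icc (0:ℝ) 1, min (max t 0) 1 = t := fun t ht => by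
    rw [max_eq_left ht.1, min_eq_left ht.2]
  choose ch hch hcheq using hφ
  have hφ' : IsLocalHomeomorph φ := fun x => ⟨ch x, hch x, hcheq x⟩
  set Γ : ℝ → E := Γf y with hΓdef
  obtain ⟨δ, hδpos, hδ⟩ := lebesgue_number_lemma_of_metric
    (isCompact_Icc (a := (0:ℝ)) (b := 1))
    (c := fun t : ℝ => Γ ⁻¹' (ch (Γ t)).source)
    (fun t => (ch (Γ t)).open_source.preimage (hΓfc y))
    (fun t _ => mem_iUnion.2 ⟨t, mem_preimage.2 (hch (Γ t))⟩)
  obtain ⟨n₀, hn₀⟩ := exists_nat_one_div_lt hδpos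
  set N : ℕ := n₀ + 1 with hNdef
  have hN0 : (0:ℝ) < N := by positivity
  have hNδ : (1:ℝ)/N < δ := by
    have : ((N:ℝ)) = (n₀:ℝ) + 1 := by push_cast [hNdef]; ring
    rw [this]; exact hn₀
  have hcov : ∀ i : ℕ, i < N → ∃ e : OpenPartialHomeomorph E E, (φ = ⇑e) ∧
      ∀ s ∈ Icc ((i:ℝ)/N) (((i:ℝ)+1)/N), Γ s ∈ e.source := by
    intro i hi
    have hi' : (i:ℝ) ≤ (N:ℝ) - 1 := by
      have : (i:ℝ) + 1 ≤ (N:ℝ) := by exact_mod_cast hi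
      linarith
    have hmem : (i:ℝ)/N ∈ Icc (0:ℝ) 1 := by
      constructor
      · positivity
      · rw [div_le_one hN0]; linarith
    obtain ⟨t', ht'⟩ := hδ ((i:ℝ)/N) hmem
    refine ⟨ch (Γ t'), hcheq (Γ t'), fun s hs => ht' ?_⟩
    rw [Real.ball_eq_Ioo]
    have h1 : (i:ℝ)/N ≤ s := hs.1
    have h2 : s ≤ (i:ℝ)/N + 1/N := by
      have h := hs.2
      rw [show (i:ℝ)/N + 1/N = ((i:ℝ)+1)/N by ring]
      exact h
    constructor <;> [linarith; linarith]
  choose es hesφ hesΓ using hcov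
  have main : ∀ i : ℕ, i ≤ N → ∃ W ∈ 𝓝 y, ∃ g : E → E, ContinuousOn g W ∧
      ∀ y' ∈ W, Γf y' ((i:ℝ)/N) = g y' := by
    intro i hiN
    induction i with
    | zero =>
      refine ⟨univ, univ_mem, fun _ => x₀, continuousOn_const, fun y' _ => ?_⟩
      simpa using hΓf0 y'
    | succ i ih =>
      have hi : i < N := hiN
      obtain ⟨W, hW, g, hgc, hgval⟩ := ih (le_of_lt hi)
      set e := es i hi with hedef
      set t₁ : ℝ := (i:ℝ)/N with ht₁def
      set t₂ : ℝ := ((i:ℝ)+1)/N with ht₂def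
      have ht₁₂ : t₁ ≤ t₂ := by
        rw [ht₁def, ht₂def, div_le_div_iff_of_pos_right hN0]
        linarith
      have hsub : Icc t₁ t₂ ⊆ Icc (0:ℝ) 1 := by
        intro t ht
        constructor
        · have : (0:ℝ) ≤ t₁ := by positivity
          linarith [ht.1]
        · have hi' : (i:ℝ) + 1 ≤ (N:ℝ) := by exact_mod_cast hi
          have : t₂ ≤ 1 := by rw [ht₂def, div_le_one hN0]; linarith
          linarith [ht.2]
      have hΓsrc : ∀ s ∈ Icc t₁ t₂, Γ s ∈ e.source := hesΓ i hi
      have hty : ∀ t ∈ Icc t₁ t₂, t • y ∈ e.target := by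
        intro t ht
        have h1 : φ (Γ t) = t • y := by
          rw [hΓdef, hΓf y t, hclamp t (hsub ht)]
        rw [← h1, hesφ i hi]
        exact e.map_source (hΓsrc t ht)
      have hA : {y' : E | ∀ t ∈ Icc t₁ t₂, t • y' ∈ e.target} ∈ 𝓝 y := by
        have hcont : Continuous (fun z : E × ℝ => z.2 • z.1) :=
          continuous_snd.smul continuous_fst
        exact IsCompact.eventually_forall_of_forall_eventually
          (isCompact_Icc (a := t₁) (b := t₂)) (x₀ := y)
          (P := fun (y' : E) (t : ℝ) => t • y' ∈ e.target)
          (fun t ht => hcont.continuousAt.preimage_mem_nhds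
            (e.open_target.mem_nhds (hty t ht)))
      have hgy : g y ∈ e.source := by
        rw [← hgval y (mem_of_mem_nhds hW)]
        exact hΓsrc t₁ ⟨le_rfl, ht₁₂⟩
      have hB : {y' : E | g y' ∈ e.source} ∈ 𝓝 y :=
        (hgc.continuousAt hW).preimage_mem_nhds (e.open_source.mem_nhds hgy)
      refine ⟨W ∩ ({y' | ∀ t ∈ Icc t₁ t₂, t • y' ∈ e.target} ∩ {y' | g y' ∈ e.source}),
        inter_mem hW (inter_mem hA hB), fun y' => e.symm (t₂ • y'), ?_, ?_⟩
      · exact e.continuousOn_symm.comp (continuous_const_smul t₂).continuousOn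
          (fun y' hy' => hy'.2.1 t₂ ⟨ht₁₂, le_rfl⟩)
      · rintro y' ⟨hy'W, hy'A, hy'B⟩
        haveI : PreconnectedSpace (Icc t₁ t₂) := Subtype.preconnectedSpace isPreconnected_Icc
        have hg₁c : Continuous (fun t : Icc t₁ t₂ => Γf y' (t : ℝ)) :=
          (hΓfc y').comp continuous_subtype_val
        have hg₂c : Continuous (fun t : Icc t₁ t₂ => e.symm ((t:ℝ) • y')) :=
          e.continuousOn_symm.comp_continuous
            (continuous_subtype_val.smul continuous_const)
            (fun t => hy'A (t:ℝ) t.2)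
        have hcomp : ∀ t : Icc t₁ t₂, φ (Γf y' (t:ℝ)) = φ (e.symm ((t:ℝ) • y')) := by
          intro t
          rw [hΓf y' (t:ℝ), hclamp (t:ℝ) (hsub t.2), hesφ i hi]
          exact (e.right_inv (hy'A (t:ℝ) t.2)).symm
        have hival : Γf y' t₁ = g y' := hgval y' hy'W
        have hinit : g y' = e.symm (t₁ • y') := by
          have h1 : e (g y') = t₁ • y' := by
            rw [← hesφ i hi, ← hival, hΓf y' t₁, hclamp t₁ (hsub ⟨le_rfl, ht₁₂⟩)]
          rw [← h1, e.left_inv hy'B]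
        have huniq := lift_unique_aux hφ' hg₁c hg₂c hcomp
          (a₀ := (⟨t₁, le_rfl, ht₁₂⟩ : Icc t₁ t₂)) (hival.trans hinit)
        have heval := congrFun huniq (⟨t₂, ht₁₂, le_rfl⟩ : Icc t₁ t₂)
        have hcast : ((i+1 : ℕ) : ℝ)/N = t₂ := by rw [ht₂def]; push_cast; ring
        rw [hcast]
        exact heval
  obtain ⟨W, hW, g, hgc, hgval⟩ := main N le_rfl
  have hNN : ((N:ℝ))/N = 1 := div_self (ne_of_gt hN0)
  have heq : (fun y' => Γf y' 1) =ᶠ[𝓝 y] g :=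
    eventually_of_mem hW (fun y' h => by rw [← hNN]; exact hgval y' h)
  exact (hgc.continuousAt hW).congr heq.symm

end SectionContAux

set_option maxHeartbeats 800000 in
/-- A local homeomorphism `φ` of a finite-dimensional real normed space
onto itself satisfying `‖φ x‖ ≥ c‖x‖` for `‖x‖ ≥ R` (with `c > 0`, `R ≥ 0`) is bijective
and a homeomorphism of `E` onto `E`. (In particular a twisting map with these properties is
a global diffeomorphism, so the associated symmetric space has a global midpoint map.) -/
theorem global_homeomorph_of_local_homeomorph_growth
    {E : Type*} [NormedAddCommGroup E] [NormedSpace ℝ E] [FiniteDimensional ℝ E]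
    (φ : E → E) (hφ : IsLocalHomeomorph φ) (c R : ℝ) (hc : 0 < c) (hR : 0 ≤ R)
    (hgrow : ∀ x : E, R ≤ ‖x‖ → c * ‖x‖ ≤ ‖φ x‖) :
    Function.Bijective φ ∧ IsHomeomorph φ := by
  haveI : ProperSpace E := FiniteDimensional.proper ℝ E
  have hco : Continuous φ := hφ.continuous
  -- properness
  have hprop : ∀ K : Set E, IsCompact K → IsCompact (φ ⁻¹' K) := by
    intro K hK
    obtain ⟨M, hM⟩ := (Metric.isBounded_iff_subset_closedBall 0).1 hK.isBounded
    refine (isCompact_closedBall (0:E) (max R (M / c))).of_isClosed_subset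
      (hK.isClosed.preimage hco) ?_
    intro x hx
    simp only [Metric.mem_closedBall, dist_zero_right]
    rcases le_total ‖x‖ R with h | h
    · exact le_trans h (le_max_left _ _)
    · have h2 : c * ‖x‖ ≤ ‖φ x‖ := hgrow x h
      have h3 : ‖φ x‖ ≤ M := by
        have := hM hx
        simpa [Metric.mem_closedBall, dist_zero_right] using this
      have : ‖x‖ ≤ M / c := by
        rw [le_div_iff₀ hc]; linarith [h2, h3]
      exact le_trans this (le_max_right _ _)
  -- surjectivity
  have hsurj : Function.Surjective φ := by
    have hcl : IsClosed (range φ) := by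
      refine isClosed_of_closure_subset ?_
      intro y hy
      obtain ⟨x, hx, htends⟩ := mem_closure_iff_seq_limit.1 hy
      choose z hz using hx
      have hfreq : ∃ᶠ n in Filter.atTop, z n ∈ φ ⁻¹' (Metric.closedBall y 1) := by
        refine (htends.eventually (Metric.closedBall_mem_nhds y one_pos)).frequently.mono ?_
        intro n hn
        simpa [hz n] using hn
      obtain ⟨a, _, ψ, hψ, haψ⟩ :=
        (hprop _ (isCompact_closedBall y 1)).tendsto_subseq' hfreq
      have l1 : Filter.Tendsto (fun k => φ (z (ψ k))) Filter.atTop (𝓝 (φ a)) :=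
        hco.continuousAt.tendsto.comp haψ
      have l2 : Filter.Tendsto (fun k => φ (z (ψ k))) Filter.atTop (𝓝 y) := by
        have : (fun k => φ (z (ψ k))) = fun k => x (ψ k) := funext fun k => hz (ψ k)
        rw [this]
        exact htends.comp hψ.tendsto_atTop
      exact ⟨a, tendsto_nhds_unique l1 l2⟩
    have : range φ = univ :=
      IsClopen.eq_univ ⟨hcl, hφ.isOpenMap.isOpen_range⟩ ⟨φ 0, mem_range_self 0⟩
    exact range_eq_univ.mp this
  obtain ⟨x₀, hx₀⟩ := hsurj 0
  -- lifts of the straight-line paths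
  have hlift : ∀ y : E, ∃ Γ : ℝ → E, Continuous Γ ∧ Γ 0 = x₀ ∧
      ∀ t, φ (Γ t) = (min (max t 0) 1) • y := by
    intro y
    have hγc : Continuous (fun t : ℝ => (min (max t 0) 1) • y) :=
      ((continuous_id.max continuous_const).min continuous_const).smul continuous_const
    refine lift_exists_aux hφ hprop _ hγc ?_ ?_ x₀ ?_
    · intro t ht
      simp [max_eq_right ht]
    · intro t ht
      simp [max_eq_left (le_trans zero_le_one ht), min_eq_right ht]
    · rw [hx₀]
      simp
  choose Γf hΓfc hΓf0 hΓf using hlift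
  set s : E → E := fun y => Γf y 1 with hsdef
  have hsc : Continuous s := continuous_iff_continuousAt.2
    (fun y => section_continuousAt hφ x₀ Γf hΓfc hΓf0 hΓf y)
  have hφs : ∀ y, φ (s y) = y := by
    intro y
    have := hΓf y 1
    simpa using this
  have hs0 : s 0 = x₀ := by
    have huniq := lift_unique_aux hφ (g₁ := Γf 0) (g₂ := fun _ => x₀)
      (hΓfc 0) continuous_const ?_ (a₀ := (0:ℝ)) (hΓf0 0)
    · exact congrFun huniq 1
    · intro t
      rw [hΓf 0 t, hx₀]
      simp
  have hC : {x | s (φ x) = x} = univ := by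
    apply IsClopen.eq_univ
    · constructor
      · exact isClosed_eq (hsc.comp hco) continuous_id
      · rw [isOpen_iff_mem_nhds]
        intro x hx
        have hx : s (φ x) = x := hx
        obtain ⟨e, hxe, hee⟩ := hφ x
        have h1 : ∀ᶠ x' in 𝓝 x, s (φ x') ∈ e.source :=
          ((hsc.comp hco).continuousAt) (e.open_source.mem_nhds (show s (φ x) ∈ e.source by rw [hx]; exact hxe))
        have h2 : ∀ᶠ x' in 𝓝 x, x' ∈ e.source :=
          e.open_source.mem_nhds hxe
        filter_upwards [h1, h2] with x' hx1 hx2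
        have heq : e (s (φ x')) = e x' := by
          rw [← hee]
          exact hφs (φ x')
        exact e.injOn hx1 hx2 heq
    · exact ⟨x₀, show s (φ x₀) = x₀ by rw [hx₀]; exact hs0⟩
  have hsφ : ∀ x, s (φ x) = x := fun x => (hC ▸ mem_univ x : x ∈ {x | s (φ x) = x})
  have hbij : Function.Bijective φ :=
    ⟨fun a b h => by rw [← hsφ a, h, hsφ b], fun y => ⟨s y, hφs y⟩⟩
  exact ⟨hbij, hφ.continuous, hφ.isOpenMap, hbij⟩
end

section
/- On M = ℝ² with symmetries s_{(p,q)}(p',q') := (2p − p', 2·cosh(p − p')·q − q'), define for a Schwartz function u on ℝ² its partial Fourier transform F₂u(a,α) := ∫_ℝ e^{−iαl} u(a,l) dl, and the inner product ⟪u,v⟫ := ∫_{ℝ²} (1+α²)^{−1/2} · F₂u(a,α) · conj(F₂v(a,α)) da dα. Then for every x₀ ∈ ℝ² and all Schwartz functions u, v on ℝ², both integrals converge absolutely and ⟪u ∘ s_{x₀}, v ∘ s_{x₀}⟫ = ⟪u, v⟫; i.e. the pre-Hilbert inner product of the deformed algebra is invariant under the pullback action of all symmetries. -/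
open MeasureTheory Real Complex FourierTransform

-- decay bound
lemma decay_bound (u : SchwartzMap (ℝ × ℝ) ℂ) (n : ℕ) :
    ∃ K : ℝ, 0 ≤ K ∧ ∀ a l : ℝ,
      (1 + a ^ 2) * (1 + l ^ 2) * ‖iteratedFDeriv ℝ n u (a, l)‖ ≤ K := by
  obtain ⟨C0, hC0', h0⟩ := u.decay 0 n
  obtain ⟨C2, hC2', h2⟩ := u.decay 2 n
  obtain ⟨C4, hC4', h4⟩ := u.decay 4 n
  have hC0 : 0 ≤ C0 := hC0'.le
  have hC2 : 0 ≤ C2 := hC2'.le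
  have hC4 : 0 ≤ C4 := hC4'.le
  refine ⟨C0 + 2 * C2 + C4, by positivity, fun a l => ?_⟩
  set x : ℝ × ℝ := (a, l)
  have hD : 0 ≤ ‖iteratedFDeriv ℝ n u x‖ := norm_nonneg _
  have ha : a ^ 2 ≤ ‖x‖ ^ 2 := by
    have := norm_fst_le x
    have : |a| ≤ ‖x‖ := this
    nlinarith [abs_nonneg a, _root_.sq_abs a]
  have hl : l ^ 2 ≤ ‖x‖ ^ 2 := by
    have := norm_snd_le x
    have : |l| ≤ ‖x‖ := this
    nlinarith [abs_nonneg l, _root_.sq_abs l]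
  have e0 := h0 x
  have e2 := h2 x
  have e4 := h4 x
  simp only [pow_zero, one_mul] at e0
  nlinarith [sq_nonneg (‖x‖^2 - a^2), sq_nonneg (‖x‖^2 - l^2), mul_nonneg (sub_nonneg.2 ha) hD,
    mul_nonneg (sub_nonneg.2 hl) hD, mul_nonneg (mul_nonneg (sub_nonneg.2 ha) (sub_nonneg.2 hl)) hD]

noncomputable def d1f (u : SchwartzMap (ℝ × ℝ) ℂ) (a l : ℝ) : ℂ :=
  fderiv ℝ u (a, l) (0, 1)
noncomputable def d2f (u : SchwartzMap (ℝ × ℝ) ℂ) (a l : ℝ) : ℂ :=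
  fderiv ℝ (fderiv ℝ u) (a, l) (0, 1) (0, 1)

lemma hasDerivAt_d0 (u : SchwartzMap (ℝ × ℝ) ℂ) (a l : ℝ) :
    HasDerivAt (fun t : ℝ => u (a, t)) (d1f u a l) l := by
  have hγ : HasDerivAt (fun t : ℝ => ((a, t) : ℝ × ℝ)) ((0 : ℝ), (1 : ℝ)) l :=
    (hasDerivAt_const l a).prodMk (hasDerivAt_id l)
  have hu : HasFDerivAt u (fderiv ℝ u (a, l)) (a, l) :=
    (u.differentiable (a, l)).hasFDerivAt
  exact hu.comp_hasDerivAt l hγ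

lemma hasDerivAt_d1 (u : SchwartzMap (ℝ × ℝ) ℂ) (a l : ℝ) :
    HasDerivAt (d1f u a) (d2f u a l) l := by
  have hγ : HasDerivAt (fun t : ℝ => ((a, t) : ℝ × ℝ)) ((0 : ℝ), (1 : ℝ)) l :=
    (hasDerivAt_const l a).prodMk (hasDerivAt_id l)
  have hF' : ContDiff ℝ ((⊤ : ℕ∞) : WithTop ℕ∞) (fderiv ℝ u) :=
    (u.smooth ⊤).fderiv_right (mod_cast le_top)
  have hF : Differentiable ℝ (fderiv ℝ u) := hF'.differentiable (by simp)
  have hu : HasFDerivAt (fderiv ℝ u) (fderiv ℝ (fderiv ℝ u) (a, l)) (a, l) :=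
    (hF (a, l)).hasFDerivAt
  have h1 : HasDerivAt (fun t : ℝ => fderiv ℝ u (a, t))
      (fderiv ℝ (fderiv ℝ u) (a, l) (0, 1)) l := hu.comp_hasDerivAt l hγ
  have h2 := h1.clm_apply (hasDerivAt_const l ((0 : ℝ), (1 : ℝ)))
  simp only [map_zero, add_zero] at h2
  exact h2

lemma norm_d1_le (u : SchwartzMap (ℝ × ℝ) ℂ) (a l : ℝ) :
    ‖d1f u a l‖ ≤ ‖iteratedFDeriv ℝ 1 u (a, l)‖ := by
  have h : d1f u a l = iteratedFDeriv ℝ 1 u (a, l) ![((0 : ℝ), (1 : ℝ))] := by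
    rw [iteratedFDeriv_one_apply]; rfl
  rw [h]
  calc ‖iteratedFDeriv ℝ 1 u (a, l) ![((0 : ℝ), (1 : ℝ))]‖
      ≤ ‖iteratedFDeriv ℝ 1 u (a, l)‖ * ∏ i, ‖(![((0 : ℝ), (1 : ℝ))] : Fin 1 → ℝ × ℝ) i‖ :=
        ContinuousMultilinearMap.le_opNorm _ _
    _ = ‖iteratedFDeriv ℝ 1 u (a, l)‖ := by
        simp [Prod.norm_def]

lemma norm_d2_le (u : SchwartzMap (ℝ × ℝ) ℂ) (a l : ℝ) :
    ‖d2f u a l‖ ≤ ‖iteratedFDeriv ℝ 2 u (a, l)‖ := by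
  have h : d2f u a l = iteratedFDeriv ℝ 2 u (a, l) ![((0 : ℝ), (1 : ℝ)), ((0 : ℝ), (1 : ℝ))] := by
    rw [iteratedFDeriv_two_apply]; rfl
  rw [h]
  calc _ ≤ ‖iteratedFDeriv ℝ 2 u (a, l)‖ *
        ∏ i, ‖(![((0 : ℝ), (1 : ℝ)), ((0 : ℝ), (1 : ℝ))] : Fin 2 → ℝ × ℝ) i‖ :=
        ContinuousMultilinearMap.le_opNorm _ _
    _ = ‖iteratedFDeriv ℝ 2 u (a, l)‖ := by
        simp [Prod.norm_def, Fin.prod_univ_two]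

lemma integrable_of_le_inv_one_add_sq {g : ℝ → ℂ} (hg : Continuous g) {B : ℝ}
    (hB : ∀ l, ‖g l‖ ≤ B * (1 + l ^ 2)⁻¹) :
    Integrable g ∧ ∫ l, ‖g l‖ ≤ B * π := by
  have hint : Integrable (fun l : ℝ => B * (1 + l ^ 2)⁻¹) :=
    integrable_inv_one_add_sq.const_mul B
  have h1 : Integrable g := by
    refine hint.mono' hg.aestronglyMeasurable ?_
    filter_upwards with l
    exact hB l
  refine ⟨h1, ?_⟩
  calc ∫ l, ‖g l‖ ≤ ∫ l, B * (1 + l ^ 2)⁻¹ :=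
        integral_mono h1.norm hint hB
    _ = B * π := by rw [MeasureTheory.integral_const_mul, integral_univ_inv_one_add_sq]
lemma cont_d1 (u : SchwartzMap (ℝ × ℝ) ℂ) (a : ℝ) : Continuous (d1f u a) := by
  have h : Continuous (fderiv ℝ u) := ((u.smooth ⊤).continuous_fderiv (by simp))
  exact (h.comp (continuous_const.prodMk continuous_id)).clm_apply continuous_const

lemma cont_d2 (u : SchwartzMap (ℝ × ℝ) ℂ) (a : ℝ) : Continuous (d2f u a) := by
  have hF' : ContDiff ℝ ((⊤ : ℕ∞) : WithTop ℕ∞) (fderiv ℝ u) :=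
    (u.smooth ⊤).fderiv_right (mod_cast le_top)
  have h : Continuous (fderiv ℝ (fderiv ℝ u)) := hF'.continuous_fderiv (by simp)
  exact (((h.comp (continuous_const.prodMk continuous_id)).clm_apply
    continuous_const).clm_apply continuous_const)

lemma F2_eq_fourier (g : ℝ → ℂ) (α : ℝ) :
    (∫ l : ℝ, Complex.exp (-(Complex.I * (α : ℂ) * (l : ℂ))) * g l)
      = 𝓕 g (α / (2 * π)) := by
  rw [Real.fourier_real_eq_integral_exp_smul]
  congr 1
  ext l
  rw [smul_eq_mul]
  congr 2
  have h : (-2 * π * l * (α / (2 * π)) : ℝ) = -(α * l) := by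
    field_simp
  rw [h]
  push_cast
  ring

lemma slice_pack (u : SchwartzMap (ℝ × ℝ) ℂ) :
    ∃ C : ℝ, 0 ≤ C ∧ ∀ a : ℝ,
      Integrable (fun l : ℝ => u (a, l)) ∧
      Integrable (d1f u a) ∧ Integrable (d2f u a) ∧
      (∫ l, ‖u (a, l)‖) ≤ C * (1 + a ^ 2)⁻¹ ∧
      (∫ l, ‖d2f u a l‖) ≤ C * (1 + a ^ 2)⁻¹ := by
  obtain ⟨K0, hK0, h0⟩ := decay_bound u 0
  obtain ⟨K1, hK1, h1⟩ := decay_bound u 1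
  obtain ⟨K2, hK2, h2⟩ := decay_bound u 2
  refine ⟨(K0 + K1 + K2) * π, by positivity, fun a => ?_⟩
  have hpa : (0 : ℝ) < 1 + a ^ 2 := by positivity
  have key : ∀ n : ℕ, ∀ K : ℝ, (∀ a l : ℝ,
        (1 + a ^ 2) * (1 + l ^ 2) * ‖iteratedFDeriv ℝ n u (a, l)‖ ≤ K) →
      ∀ g : ℝ → ℂ, (∀ l, ‖g l‖ ≤ ‖iteratedFDeriv ℝ n u (a, l)‖) → Continuous g →
      Integrable g ∧ ∫ l, ‖g l‖ ≤ (K * (1 + a ^ 2)⁻¹) * π := by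
    intro n K hK g hg hgc
    refine integrable_of_le_inv_one_add_sq hgc fun l => ?_
    have h := hK a l
    have hpl : (0 : ℝ) < 1 + l ^ 2 := by positivity
    have : ‖g l‖ * ((1 + a ^ 2) * (1 + l ^ 2)) ≤ K := by
      calc ‖g l‖ * ((1 + a ^ 2) * (1 + l ^ 2))
          ≤ ‖iteratedFDeriv ℝ n u (a, l)‖ * ((1 + a ^ 2) * (1 + l ^ 2)) := by
            apply mul_le_mul_of_nonneg_right (hg l); positivity
        _ ≤ K := by linarith [h]
    calc ‖g l‖ = ‖g l‖ * ((1 + a ^ 2) * (1 + l ^ 2)) * ((1 + a ^ 2)⁻¹ * (1 + l ^ 2)⁻¹) := by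
          field_simp
      _ ≤ K * ((1 + a ^ 2)⁻¹ * (1 + l ^ 2)⁻¹) := by
          apply mul_le_mul_of_nonneg_right this; positivity
      _ = K * (1 + a ^ 2)⁻¹ * (1 + l ^ 2)⁻¹ := by ring
  have g0cont : Continuous (fun l : ℝ => u (a, l)) :=
    u.continuous.comp (continuous_const.prodMk continuous_id)
  have p0 := key 0 K0 h0 (fun l => u (a, l))
    (fun l => by simp [norm_iteratedFDeriv_zero]) g0cont
  have p1 := key 1 K1 h1 (d1f u a) (norm_d1_le u a) (cont_d1 u a)
  have p2 := key 2 K2 h2 (d2f u a) (norm_d2_le u a) (cont_d2 u a)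
  have hmono : ∀ K : ℝ, 0 ≤ K → K * (1 + a ^ 2)⁻¹ * π ≤ (K0 + K1 + K2) * π * (1 + a ^ 2)⁻¹ →
      True := fun _ _ _ => trivial
  refine ⟨p0.1, p1.1, p2.1, ?_, ?_⟩
  · refine p0.2.trans ?_
    have : K0 ≤ K0 + K1 + K2 := by linarith
    calc K0 * (1 + a ^ 2)⁻¹ * π ≤ (K0 + K1 + K2) * (1 + a ^ 2)⁻¹ * π := by
          apply mul_le_mul_of_nonneg_right _ pi_nonneg
          apply mul_le_mul_of_nonneg_right this (by positivity)
      _ = (K0 + K1 + K2) * π * (1 + a ^ 2)⁻¹ := by ring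
  · refine p2.2.trans ?_
    have : K2 ≤ K0 + K1 + K2 := by linarith
    calc K2 * (1 + a ^ 2)⁻¹ * π ≤ (K0 + K1 + K2) * (1 + a ^ 2)⁻¹ * π := by
          apply mul_le_mul_of_nonneg_right _ pi_nonneg
          apply mul_le_mul_of_nonneg_right this (by positivity)
      _ = (K0 + K1 + K2) * π * (1 + a ^ 2)⁻¹ := by ring

lemma F2_decay (u : SchwartzMap (ℝ × ℝ) ℂ) :
    ∃ C : ℝ, 0 ≤ C ∧ ∀ a α : ℝ,
      ‖∫ l : ℝ, Complex.exp (-(Complex.I * (α : ℂ) * (l : ℂ))) * u (a, l)‖ ≤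
        C * ((1 + a ^ 2)⁻¹ * (1 + α ^ 2)⁻¹) := by
  obtain ⟨C, hC, hpack⟩ := slice_pack u
  refine ⟨2 * C, by positivity, fun a α => ?_⟩
  obtain ⟨hi0, hi1, hi2, hb0, hb2⟩ := hpack a
  set g0 : ℝ → ℂ := fun l => u (a, l) with hg0
  have hdg0 : deriv g0 = d1f u a := funext fun l => (hasDerivAt_d0 u a l).deriv
  have hdg1 : deriv (d1f u a) = d2f u a := funext fun l => (hasDerivAt_d1 u a l).deriv
  have hdiff0 : Differentiable ℝ g0 := fun l => (hasDerivAt_d0 u a l).differentiableAt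
  have hdiff1 : Differentiable ℝ (d1f u a) := fun l => (hasDerivAt_d1 u a l).differentiableAt
  have hF1 : 𝓕 (d1f u a) = fun w : ℝ => (2 * π * Complex.I * w) • (𝓕 g0 w) := by
    rw [← hdg0]
    exact Real.fourier_deriv hi0 hdiff0 (by rwa [hdg0])
  have hF2 : 𝓕 (d2f u a) = fun w : ℝ => (2 * π * Complex.I * w) • (𝓕 (d1f u a) w) := by
    rw [← hdg1]
    exact Real.fourier_deriv hi1 hdiff1 (by rwa [hdg1])
  set w : ℝ := α / (2 * π) with hw
  have key2 : ‖𝓕 (d2f u a) w‖ = (2 * π * |w|) ^ 2 * ‖𝓕 g0 w‖ := by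
    rw [hF2, hF1]
    simp only [smul_eq_mul, ← mul_assoc]
    rw [norm_mul, norm_mul]
    simp only [norm_mul, Complex.norm_I, Complex.norm_real]
    rw [Real.norm_eq_abs, Real.norm_eq_abs, abs_of_pos pi_pos]
    have h2n : ‖(2 : ℂ)‖ = 2 := by norm_num
    rw [h2n]
    ring
  have habs : 2 * π * |w| = |α| := by
    rw [hw, abs_div]
    rw [abs_of_pos (by positivity : (0:ℝ) < 2 * π)]
    field_simp
  have hb0' : ‖𝓕 g0 w‖ ≤ C * (1 + a ^ 2)⁻¹ :=
    (VectorFourier.norm_fourierIntegral_le_integral_norm 𝐞 volume (innerₗ ℝ) g0 w).trans hb0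
  have hb2' : α ^ 2 * ‖𝓕 g0 w‖ ≤ C * (1 + a ^ 2)⁻¹ := by
    have h2 : ‖𝓕 (d2f u a) w‖ ≤ C * (1 + a ^ 2)⁻¹ :=
      (VectorFourier.norm_fourierIntegral_le_integral_norm 𝐞 volume (innerₗ ℝ) (d2f u a) w).trans hb2
    rw [key2, habs] at h2
    rwa [← _root_.sq_abs α]
  have hF2u : (∫ l : ℝ, Complex.exp (-(Complex.I * (α : ℂ) * (l : ℂ))) * u (a, l)) = 𝓕 g0 w :=
    F2_eq_fourier g0 α
  rw [hF2u]
  have hsum : (1 + α ^ 2) * ‖𝓕 g0 w‖ ≤ 2 * C * (1 + a ^ 2)⁻¹ := by nlinarith [norm_nonneg (𝓕 g0 w)]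
  have hpα : (0 : ℝ) < 1 + α ^ 2 := by positivity
  calc ‖𝓕 g0 w‖ = (1 + α ^ 2) * ‖𝓕 g0 w‖ * (1 + α ^ 2)⁻¹ := by field_simp
    _ ≤ 2 * C * (1 + a ^ 2)⁻¹ * (1 + α ^ 2)⁻¹ := by
        apply mul_le_mul_of_nonneg_right hsum; positivity
    _ = 2 * C * ((1 + a ^ 2)⁻¹ * (1 + α ^ 2)⁻¹) := by ring

lemma norm_phase (α l : ℝ) : ‖Complex.exp (-(Complex.I * (α : ℂ) * (l : ℂ)))‖ = 1 := by
  have h : (-(Complex.I * (α : ℂ) * (l : ℂ))) = ((-(α * l) : ℝ) : ℂ) * Complex.I := by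
    push_cast; ring
  rw [h, Complex.norm_exp_ofReal_mul_I]

lemma phase_mul_integrable (α : ℝ) {g : ℝ → ℂ} (hg : Integrable g) :
    Integrable (fun l : ℝ => Complex.exp (-(Complex.I * (α : ℂ) * (l : ℂ))) * g l) := by
  refine hg.bdd_mul ?_ (Filter.Eventually.of_forall fun l => (norm_phase α l).le)
  exact (Complex.continuous_exp.comp (by fun_prop)).aestronglyMeasurable

lemma F2_meas {f : ℝ × ℝ → ℂ} (hf : Continuous f) :
    StronglyMeasurable fun p : ℝ × ℝ =>
      ∫ l : ℝ, Complex.exp (-(Complex.I * (p.2 : ℂ) * (l : ℂ))) * f (p.1, l) := by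
  apply MeasureTheory.StronglyMeasurable.integral_prod_right'
    (f := fun q : (ℝ × ℝ) × ℝ =>
      Complex.exp (-(Complex.I * (q.1.2 : ℂ) * (q.2 : ℂ))) * f (q.1.1, q.2))
  apply Continuous.stronglyMeasurable
  apply Continuous.mul
  · exact Complex.continuous_exp.comp (by fun_prop)
  · exact hf.comp (by fun_prop)

lemma F2_shift (f : ℝ × ℝ → ℂ) (b c α : ℝ) :
    (∫ l : ℝ, Complex.exp (-(Complex.I * (α : ℂ) * (l : ℂ))) * f (b, c - l))
      = Complex.exp (-(Complex.I * (α : ℂ) * (c : ℂ))) *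
        ∫ m : ℝ, Complex.exp (-(Complex.I * ((-α : ℝ) : ℂ) * (m : ℂ))) * f (b, m) := by
  have h1 : (fun l : ℝ => Complex.exp (-(Complex.I * (α : ℂ) * (l : ℂ))) * f (b, c - l))
      = fun l : ℝ => (fun m : ℝ =>
          Complex.exp (-(Complex.I * (α : ℂ) * ((c - m : ℝ) : ℂ))) * f (b, m)) (c - l) := by
    funext l
    simp only [sub_sub_cancel]
  have h2 := integral_sub_left_eq_self (fun m : ℝ =>
    Complex.exp (-(Complex.I * (α : ℂ) * ((c - m : ℝ) : ℂ))) * f (b, m)) volume c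
  rw [h1, h2, ← MeasureTheory.integral_const_mul]
  congr 1
  funext m
  rw [← mul_assoc, ← Complex.exp_add]
  congr 2
  push_cast
  ring



open MeasureTheory

/-- On `M = ℝ²` with the symmetries
`s_{(p,q)}(p',q') = (2p − p', 2cosh(p−p')q − q')`, define the partial Fourier transform
`F₂f(a,α) = ∫ e^{−iαl} f(a,l) dl` and the inner product
`⟪f,g⟫ = ∫ (1+α²)^{−1/2} F₂f(a,α) conj(F₂g(a,α)) da dα`. Then for every `x₀ ∈ ℝ²` and
all Schwartz functions `u, v`, all the integrals involved converge absolutely and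
`⟪u ∘ s_{x₀}, v ∘ s_{x₀}⟫ = ⟪u, v⟫`: the pre-Hilbert inner product of the deformed algebra
is invariant under the pullback action of every symmetry. -/
theorem deformed_inner_product_symmetry_invariant
    (x₀ : ℝ × ℝ) (u v : SchwartzMap (ℝ × ℝ) ℂ) :
    let s : ℝ × ℝ → ℝ × ℝ → ℝ × ℝ := fun x y =>
      (2 * x.1 - y.1, 2 * Real.cosh (x.1 - y.1) * x.2 - y.2)
    let F2 : (ℝ × ℝ → ℂ) → ℝ × ℝ → ℂ := fun f p =>
      ∫ l : ℝ, Complex.exp (-(Complex.I * (p.2 : ℂ) * (l : ℂ))) * f (p.1, l)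
    let w : ℝ × ℝ → ℝ := fun p => (1 + p.2 ^ 2) ^ (-(1 / 2 : ℝ))
    let pair : (ℝ × ℝ → ℂ) → (ℝ × ℝ → ℂ) → ℂ := fun f g =>
      ∫ p : ℝ × ℝ, (w p : ℂ) * (F2 f p * (starRingEnd ℂ) (F2 g p))
    (∀ f : ℝ × ℝ → ℂ, (f = ⇑u ∨ f = ⇑v ∨ f = ⇑u ∘ s x₀ ∨ f = ⇑v ∘ s x₀) →
      ∀ a α : ℝ, Integrable
        (fun l : ℝ => Complex.exp (-(Complex.I * (α : ℂ) * (l : ℂ))) * f (a, l))) ∧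
    Integrable
      (fun p : ℝ × ℝ => (w p : ℂ) * (F2 (⇑u ∘ s x₀) p * (starRingEnd ℂ) (F2 (⇑v ∘ s x₀) p))) ∧
    Integrable
      (fun p : ℝ × ℝ => (w p : ℂ) * (F2 ⇑u p * (starRingEnd ℂ) (F2 ⇑v p))) ∧
    pair (⇑u ∘ s x₀) (⇑v ∘ s x₀) = pair ⇑u ⇑v := by
  intro s F2 w pair
  have hF2def : ∀ (f : ℝ × ℝ → ℂ) (p : ℝ × ℝ), F2 f p =
      ∫ l : ℝ, Complex.exp (-(Complex.I * (p.2 : ℂ) * (l : ℂ))) * f (p.1, l) := fun _ _ => rfl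
  have hwdef : ∀ p : ℝ × ℝ, w p = (1 + p.2 ^ 2) ^ (-(1 / 2 : ℝ)) := fun _ => rfl
  obtain ⟨Cu, hCu, hup⟩ := slice_pack u
  obtain ⟨Cv, hCv, hvp⟩ := slice_pack v
  obtain ⟨Du, hDu, hu2⟩ := F2_decay u
  obtain ⟨Dv, hDv, hv2⟩ := F2_decay v
  -- part 1: one-dimensional integrability
  have comp_slice : ∀ (h : SchwartzMap (ℝ × ℝ) ℂ) (a α : ℝ), Integrable
      (fun l : ℝ => Complex.exp (-(Complex.I * (α : ℂ) * (l : ℂ))) * (⇑h ∘ s x₀) (a, l)) := by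
    intro h a α
    obtain ⟨Ch, hCh, hhp⟩ := slice_pack h
    set b := 2 * x₀.1 - a with hb
    set c := 2 * Real.cosh (x₀.1 - a) * x₀.2 with hc
    have hint : Integrable (fun m : ℝ =>
        Complex.exp (-(Complex.I * (α : ℂ) * ((c - m : ℝ) : ℂ))) * h (b, m)) := by
      refine (hhp b).1.bdd_mul ?_ (Filter.Eventually.of_forall fun m => (norm_phase α (c - m)).le)
      exact (Complex.continuous_exp.comp (by fun_prop)).aestronglyMeasurable
    have heq : (fun l : ℝ => Complex.exp (-(Complex.I * (α : ℂ) * (l : ℂ))) * (⇑h ∘ s x₀) (a, l))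
        = fun l : ℝ => (fun m : ℝ =>
            Complex.exp (-(Complex.I * (α : ℂ) * ((c - m : ℝ) : ℂ))) * h (b, m)) (c - l) := by
      funext l
      simp only [sub_sub_cancel]
      rfl
    rw [heq]
    exact hint.comp_sub_left c
  have part1 : ∀ f : ℝ × ℝ → ℂ, (f = ⇑u ∨ f = ⇑v ∨ f = ⇑u ∘ s x₀ ∨ f = ⇑v ∘ s x₀) →
      ∀ a α : ℝ, Integrable
        (fun l : ℝ => Complex.exp (-(Complex.I * (α : ℂ) * (l : ℂ))) * f (a, l)) := by
    rintro f (rfl | rfl | rfl | rfl) a α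
    · exact phase_mul_integrable α (hup a).1
    · exact phase_mul_integrable α (hvp a).1
    · exact comp_slice u a α
    · exact comp_slice v a α
  -- part 3: integrability of the undeformed integrand
  have hGmaj : Integrable (fun p : ℝ × ℝ => (Du * Dv) * ((1 + p.1 ^ 2)⁻¹ * (1 + p.2 ^ 2)⁻¹)) := by
    have h := (integrable_inv_one_add_sq.mul_prod integrable_inv_one_add_sq).const_mul (Du * Dv)
    rwa [← MeasureTheory.Measure.volume_eq_prod] at h
  have hGm : AEStronglyMeasurable
      (fun p : ℝ × ℝ => (w p : ℂ) * (F2 ⇑u p * (starRingEnd ℂ) (F2 ⇑v p))) volume := by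
    simp only [starRingEnd_apply]
    refine AEStronglyMeasurable.mul ?_ (((F2_meas u.continuous).aestronglyMeasurable).mul
      (Continuous.comp_aestronglyMeasurable continuous_star
        (F2_meas v.continuous).aestronglyMeasurable))
    apply Continuous.aestronglyMeasurable
    apply Complex.continuous_ofReal.comp
    apply Continuous.rpow_const (by fun_prop)
    intro p
    left
    positivity
  have hGbound : ∀ p : ℝ × ℝ, ‖(w p : ℂ) * (F2 ⇑u p * (starRingEnd ℂ) (F2 ⇑v p))‖ ≤
      (Du * Dv) * ((1 + p.1 ^ 2)⁻¹ * (1 + p.2 ^ 2)⁻¹) := by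
    intro p
    have hA : ‖F2 ⇑u p‖ ≤ Du * ((1 + p.1 ^ 2)⁻¹ * (1 + p.2 ^ 2)⁻¹) := by
      rw [hF2def]; exact hu2 p.1 p.2
    have hB0 : ‖F2 ⇑v p‖ ≤ Dv * ((1 + p.1 ^ 2)⁻¹ * (1 + p.2 ^ 2)⁻¹) := by
      rw [hF2def]; exact hv2 p.1 p.2
    have hx1 : (1 + p.1 ^ 2)⁻¹ ≤ 1 := by
      rw [inv_le_one_iff₀]; right; nlinarith [sq_nonneg p.1]
    have hx2 : (1 + p.2 ^ 2)⁻¹ ≤ 1 := by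
      rw [inv_le_one_iff₀]; right; nlinarith [sq_nonneg p.2]
    have hxy : (1 + p.1 ^ 2)⁻¹ * (1 + p.2 ^ 2)⁻¹ ≤ 1 :=
      mul_le_one₀ hx1 (by positivity) hx2
    have hB : ‖F2 ⇑v p‖ ≤ Dv := hB0.trans (by nlinarith)
    have hw1 : |w p| ≤ 1 := by
      rw [hwdef, _root_.abs_of_nonneg (by positivity)]
      apply Real.rpow_le_one_of_one_le_of_nonpos
      · nlinarith [sq_nonneg p.2]
      · norm_num
    rw [norm_mul, norm_mul, Complex.norm_real, starRingEnd_apply, norm_star]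
    calc |w p| * (‖F2 ⇑u p‖ * ‖F2 ⇑v p‖)
        ≤ 1 * ((Du * ((1 + p.1 ^ 2)⁻¹ * (1 + p.2 ^ 2)⁻¹)) * Dv) := by
          refine mul_le_mul hw1 ?_ (by positivity) one_pos.le
          exact mul_le_mul hA hB (norm_nonneg _) (by positivity)
      _ = (Du * Dv) * ((1 + p.1 ^ 2)⁻¹ * (1 + p.2 ^ 2)⁻¹) := by ring
  have h3 : Integrable
      (fun p : ℝ × ℝ => (w p : ℂ) * (F2 ⇑u p * (starRingEnd ℂ) (F2 ⇑v p))) := by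
    exact hGmaj.mono' hGm (Filter.Eventually.of_forall hGbound)
  -- the key pointwise identity
  have hfun : (fun p : ℝ × ℝ => (w p : ℂ) * (F2 (⇑u ∘ s x₀) p * (starRingEnd ℂ) (F2 (⇑v ∘ s x₀) p)))
      = fun p : ℝ × ℝ => (fun q : ℝ × ℝ => (w q : ℂ) * (F2 ⇑u q * (starRingEnd ℂ) (F2 ⇑v q)))
          (((2 * x₀.1, 0) : ℝ × ℝ) - p) := by
    funext p
    obtain ⟨a, α⟩ := p
    have hsub : ((2 * x₀.1, 0) : ℝ × ℝ) - (a, α) = (2 * x₀.1 - a, -α) := by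
      simp [Prod.ext_iff]
    rw [hsub]
    set b := 2 * x₀.1 - a with hb
    set c := 2 * Real.cosh (x₀.1 - a) * x₀.2 with hc
    have hshift : ∀ h : SchwartzMap (ℝ × ℝ) ℂ, F2 (⇑h ∘ s x₀) (a, α)
        = Complex.exp (-(Complex.I * (α : ℂ) * (c : ℂ))) * F2 ⇑h (b, -α) := by
      intro h
      rw [hF2def, hF2def]
      have : (fun l : ℝ => Complex.exp (-(Complex.I * (α : ℂ) * (l : ℂ))) * (⇑h ∘ s x₀) (a, l))
          = fun l : ℝ => Complex.exp (-(Complex.I * (α : ℂ) * (l : ℂ))) * h (b, c - l) := rfl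
      rw [this, F2_shift (⇑h) b c α]
    rw [hshift u, hshift v, map_mul]
    have hphase : Complex.exp (-(Complex.I * (α : ℂ) * (c : ℂ))) *
        (starRingEnd ℂ) (Complex.exp (-(Complex.I * (α : ℂ) * (c : ℂ)))) = 1 := by
      rw [← Complex.exp_conj, ← Complex.exp_add]
      have hz : (-(Complex.I * (α : ℂ) * (c : ℂ))) +
          (starRingEnd ℂ) (-(Complex.I * (α : ℂ) * (c : ℂ))) = 0 := by
        simp only [map_neg, map_mul, Complex.conj_I, Complex.conj_ofReal]
        ring
      rw [hz, Complex.exp_zero]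
    have hw : w (a, α) = w (b, -α) := by
      rw [hwdef, hwdef]
      norm_num
    rw [hw]
    set E := Complex.exp (-(Complex.I * (α : ℂ) * (c : ℂ)))
    set A := F2 ⇑u (b, -α)
    set B := F2 ⇑v (b, -α)
    calc (w (b, -α) : ℂ) * (E * A * ((starRingEnd ℂ) E * (starRingEnd ℂ) B))
        = (w (b, -α) : ℂ) * ((E * (starRingEnd ℂ) E) * (A * (starRingEnd ℂ) B)) := by ring
      _ = (w (b, -α) : ℂ) * (A * (starRingEnd ℂ) B) := by rw [hphase, one_mul]
  -- part 2
  have h2 : Integrable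
      (fun p : ℝ × ℝ => (w p : ℂ) * (F2 (⇑u ∘ s x₀) p * (starRingEnd ℂ) (F2 (⇑v ∘ s x₀) p))) := by
    rw [hfun]
    exact h3.comp_sub_left _
  -- part 4
  have h4 : pair (⇑u ∘ s x₀) (⇑v ∘ s x₀) = pair ⇑u ⇑v := by
    show (∫ p : ℝ × ℝ, (w p : ℂ) * (F2 (⇑u ∘ s x₀) p * (starRingEnd ℂ) (F2 (⇑v ∘ s x₀) p)))
        = ∫ p : ℝ × ℝ, (w p : ℂ) * (F2 ⇑u p * (starRingEnd ℂ) (F2 ⇑v p))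
    rw [hfun]
    exact integral_sub_left_eq_self
      (fun q : ℝ × ℝ => (w q : ℂ) * (F2 ⇑u q * (starRingEnd ℂ) (F2 ⇑v q))) volume
      ((2 * x₀.1, 0) : ℝ × ℝ)
  exact ⟨part1, h2, h3, h4⟩
end
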